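/- arXiv:2211.13397 — 5 statements merged into one kernel-verified Lean document; each statement's English description precedes it below -/
import Mathlib

section
/- Let X be a k-geodetic graph and let u, v be vertices of X. If there exist k+1 pairwise distinct paths of the same length n from u to v, then there exists a path from u to v of length n-1 or of length n-2. -/
/-- A connected simple graph is `k`-geodetic if between any pair of vertices there are
at most `k` geodesics (walks of minimal length between their endpoints). -/
def IsKGeodetic {V : Type*} (X : SimpleGraph V) (k : ℕ) : Prop :=
  X.Connected ∧ ∀ (u v : V) (s : Finset (X.Walk u v)),
    (∀ p ∈ s, p.length = X.dist u v) → s.card ≤ k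

/-- Padding lemma: given a neighbour of `v`, walks from `u` to `v` of any length
`p.length + 2 * t` exist. -/
lemma pad_walk {V : Type*} {X : SimpleGraph V} {u v w : V} (h : X.Adj v w)
    (p : X.Walk u v) (t : ℕ) : ∃ q : X.Walk u v, q.length = p.length + 2 * t := by
  induction t with
  | zero => exact ⟨p, by simp⟩
  | succ t ih =>
    obtain ⟨q, hq⟩ := ih
    refine ⟨q.append (SimpleGraph.Walk.cons h (SimpleGraph.Walk.cons h.symm .nil)), ?_⟩
    simp [hq]; ring

/-- Let `X` be a `k`-geodetic graph and `u, v` vertices of `X`.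
If there exist `k + 1` pairwise distinct paths of the same length `n` from `u` to `v`,
then there exists a path from `u` to `v` of length `n - 1` or of length `n - 2`. -/
theorem exists_shorter_path_of_distinct_paths {V : Type*} (X : SimpleGraph V) (k : ℕ)
    (hk : 0 < k) (hX : IsKGeodetic X k) (u v : V) (n : ℕ)
    (f : Fin (k + 1) → X.Walk u v) (hf : Function.Injective f)
    (hlen : ∀ i, (f i).length = n) :
    ∃ q : X.Walk u v, q.length = n - 1 ∨ q.length = n - 2 := by
  classical
  obtain ⟨hconn, hgeo⟩ := hX
  -- n ≥ 1: otherwise all walks are equal (length 0 forces u = v, walk = nil)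
  have hn : 1 ≤ n := by
    by_contra h
    push_neg at h
    interval_cases n
    have hu : u = v := SimpleGraph.Walk.eq_of_length_eq_zero (hlen 0)
    subst hu
    have h01 : f 0 = f 1 := by
      have e0 := SimpleGraph.Walk.nil_iff_length_eq.mpr (hlen 0)
      have e1 := SimpleGraph.Walk.nil_iff_length_eq.mpr (hlen 1)
      rw [SimpleGraph.Walk.nil_iff_eq_nil] at e0 e1
      rw [e0, e1]
    have : (0 : Fin (k + 1)) = 1 := hf h01
    have : ((0 : Fin (k+1)) : ℕ) = ((1 : Fin (k+1)) : ℕ) := by rw [this]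
    simp [Fin.val_one, Nat.mod_eq_of_lt (by omega : 1 < k + 1)] at this
  -- d < n
  set d := X.dist u v with hd
  have hdle : d ≤ n := by
    have := SimpleGraph.dist_le (f 0)
    rw [hlen 0] at this; exact this
  have hdlt : d < n := by
    rcases lt_or_eq_of_le hdle with h | h
    · exact h
    · exfalso
      have hcard : (Finset.image f Finset.univ).card = k + 1 := by
        rw [Finset.card_image_of_injective _ hf, Finset.card_univ, Fintype.card_fin]
      have := hgeo u v (Finset.image f Finset.univ) (by
        intro p hp
        obtain ⟨i, _, rfl⟩ := Finset.mem_image.mp hp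
        rw [hlen i, ← hd, h])
      omega
  -- a neighbour of v, from the walk f 0 reversed (length n ≥ 1)
  have hnb : ∃ w, X.Adj v w := by
    have hl : (f 0).reverse.length = n := by simp [hlen 0]
    have hnn : ¬ (f 0).reverse.Nil := by
      rw [SimpleGraph.Walk.nil_iff_length_eq, hl]; omega
    exact ⟨_, SimpleGraph.Walk.adj_snd hnn⟩
  obtain ⟨w, hw⟩ := hnb
  -- a walk of length d
  obtain ⟨p, hp⟩ := hconn.exists_walk_length_eq_dist u v
  rw [← hd] at hp
  rcases Nat.even_or_odd (n - d) with ⟨s, hs⟩ | ⟨s, hs⟩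
  · -- n - d = 2s, s ≥ 1, target n - 2 = d + 2(s-1)
    obtain ⟨q, hq⟩ := pad_walk hw p (s - 1)
    exact ⟨q, Or.inr (by rw [hq, hp]; omega)⟩
  · -- n - d = 2s + 1, target n - 1 = d + 2s
    obtain ⟨q, hq⟩ := pad_walk hw p s
    exact ⟨q, Or.inl (by rw [hq, hp]; omega)⟩
end

section
/- Let m and k be positive integers and set A(m,k) = m · k · ∏_{i=2}^{2m+1}(ik+1). In any k-geodetic graph, no ladder-like structure of width m has height exceeding A(m,k); that is, for any pair of asynchronously disjoint geodesics γ₁, γ₂ of the same length n, the number of indices i ∈ {0,...,n} with d(γ₁(i), γ₂(i)) = m is at most A(m,k). -/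
/-!
Fix the first rung `i₀`. For every later rung `j` the distance `d(γ₁ i₀, γ₂ j)` lies between
`(j - i₀) - m` and `(j - i₀) + m`, so the rungs split according to the defect
`e = (j - i₀) + m - d(γ₁ i₀, γ₂ j) ∈ [0, 2m]`.

Seen from an index `i`, there are at most `m k (k + 1)^e` rungs of defect `e`. Let `t` be the last
of them. Each such rung `j` gives a geodesic from `γ₁ i` to `γ₂ t`: follow `γ₁` up to the last
index `q ≤ j` from which `j` still has defect `e`, cross to `γ₂ j` along a geodesic, then follow
`γ₂`. There are at most `k` such geodesics. For `e = 0` we have `q = j`, and asynchronous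
disjointness shows that the geodesic pins `j` down to a window of `m` indices. For `e > 0` the
geodesic determines `q`, and seen from `q + 1` the rungs sharing it have smaller defect.
Summing over `e ≤ 2m` gives `m k ∑_{e ≤ 2m} (k + 1)^e ≤ A(m, k)`.
-/

open Finset

namespace SimpleGraph.Walk

variable {V : Type*} {X : SimpleGraph V} {u v : V}

def slice (p : X.Walk u v) {i j : ℕ} (h : i ≤ j) : X.Walk (p.getVert i) (p.getVert j) :=
  ((p.drop i).take (j - i)).copy rfl (by rw [drop_getVert, Nat.add_sub_cancel' h])

lemma length_slice (p : X.Walk u v) {i j : ℕ} (h : i ≤ j) (hj : j ≤ p.length) :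
    (p.slice h).length = j - i := by
  rw [slice, length_copy, take_length, drop_length]
  omega

lemma getVert_slice (p : X.Walk u v) {i j x : ℕ} (h : i ≤ j) (hx : x ≤ j - i) :
    (p.slice h).getVert x = p.getVert (i + x) := by
  simp [slice, hx]

lemma dist_getVert_of_length_eq_dist (p : X.Walk u v) (hp : p.length = X.dist u v) {i j : ℕ}
    (h : i ≤ j) (hj : j ≤ p.length) : X.dist (p.getVert i) (p.getVert j) = j - i := by
  rw [← p.length_slice h hj]
  refine (length_eq_dist_of_subwalk hp ?_).symm
  simpa [slice] using ((isSubwalk_take _ _).trans (isSubwalk_drop p i)).copy rfl _ rfl rfl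

lemma getVert_append_add {w : V} (p : X.Walk u v) (q : X.Walk v w) (x : ℕ) :
    (p.append q).getVert (p.length + x) = q.getVert x := by
  rw [getVert_append']
  split_ifs with h
  · obtain rfl : x = 0 := by omega
    simp
  · simp

lemma getVert_append_of_le {w : V} (p : X.Walk u v) (q : X.Walk v w) {x : ℕ} (hx : x ≤ p.length) :
    (p.append q).getVert x = p.getVert x := by
  rw [getVert_append', if_pos hx]

end SimpleGraph.Walk

lemma Finset.card_le_of_forall_lt_add {s : Finset ℕ} {m : ℕ} (hm : 0 < m)
    (h : ∀ a ∈ s, ∀ b ∈ s, a < b → b < a + m) : #s ≤ m := by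
  rcases s.eq_empty_or_nonempty with rfl | hs
  · simp
  calc #s ≤ #(Ico (s.min' hs) (s.min' hs + m)) := by
        refine card_le_card fun b hb => mem_Ico.2 ⟨s.min'_le b hb, ?_⟩
        rcases (s.min'_le b hb).lt_or_eq with hlt | heq
        · exact h _ (s.min'_mem hs) b hb hlt
        · omega
    _ = m := by simp

lemma pow_succ_le_mul_prod_add_one (k E : ℕ) :
    (k + 1) ^ (E + 1) ≤ k * ∏ i ∈ Icc 2 (E + 1), (i * k + 1) + 1 := by
  induction E with
  | zero => simp
  | succ E ih =>
    rw [prod_Icc_succ_top (by omega), pow_succ]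
    set P := ∏ i ∈ Icc 2 (E + 1), (i * k + 1)
    have hP : 0 < P := prod_pos fun i _ => by positivity
    have hkP : k ≤ k * (P * k) := by
      rcases Nat.eq_zero_or_pos k with rfl | hk
      · simp
      · exact Nat.le_mul_of_pos_right k (Nat.mul_pos hP hk)
    calc (k + 1) ^ (E + 1) * (k + 1) ≤ (k * P + 1) * (k + 1) := by gcongr
      _ ≤ k * (P * ((E + 1 + 1) * k + 1)) + 1 := by nlinarith

lemma geom_sum_mul_le_prod (k E : ℕ) :
    (∑ e ∈ range (E + 1), (k + 1) ^ e) * k ≤ k * ∏ i ∈ Icc 2 (E + 1), (i * k + 1) := by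
  have := geom_sum_mul_add k (E + 1)
  have := pow_succ_le_mul_prod_add_one k E
  omega

lemma IsKGeodetic.card_le_mul {V : Type*} [DecidableEq V] {X : SimpleGraph V} {ι : Type*}
    {k c : ℕ} (hX : IsKGeodetic X k) {a b : V} {J : Finset ι} (W : ι → X.Walk a b)
    (hW : ∀ j ∈ J, (W j).length = X.dist a b)
    (hc : ∀ j ∈ J, #{j' ∈ J | W j' = W j} ≤ c) : #J ≤ c * k := by
  calc #J ≤ c * #(J.image W) := card_le_mul_card_image J c fun w hw => by
        obtain ⟨j, hj, rfl⟩ := mem_image.1 hw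
        exact hc j hj
    _ ≤ c * k := by
        gcongr
        exact hX.2 a b _ fun w hw => by
          obtain ⟨j, hj, rfl⟩ := mem_image.1 hw
          exact hW j hj

namespace SimpleGraph

variable {V : Type*} {X : SimpleGraph V} {u₁ v₁ u₂ v₂ : V}

/-- Follow `p₁` from position `i` to `q`, cross to `p₂.getVert j` along a geodesic, then follow
`p₂` from position `j` to `t`. -/
lemma Connected.exists_walk_crossing (hX : X.Connected) (p₁ : X.Walk u₁ v₁) (p₂ : X.Walk u₂ v₂)
    {i q j t : ℕ} (hiq : i ≤ q) (hq : q ≤ p₁.length) (hjt : j ≤ t) (ht : t ≤ p₂.length) :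
    ∃ W : X.Walk (p₁.getVert i) (p₂.getVert t),
      W.length = q - i + X.dist (p₁.getVert q) (p₂.getVert j) + (t - j) ∧
      (∀ x ≤ q - i, W.getVert x = p₁.getVert (i + x)) ∧
      (∀ y ≤ X.dist (p₁.getVert q) (p₂.getVert j), X.dist (W.getVert (q - i + y)) (p₂.getVert j) =
        X.dist (p₁.getVert q) (p₂.getVert j) - y) ∧
      ∀ x ≤ t - j, W.getVert (q - i + X.dist (p₁.getVert q) (p₂.getVert j) + x) =
        p₂.getVert (j + x) := by
  obtain ⟨g, hg⟩ := hX.exists_walk_length_eq_dist (p₁.getVert q) (p₂.getVert j)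
  have hslice := p₁.length_slice hiq hq
  refine ⟨(p₁.slice hiq).append (g.append (p₂.slice hjt)), ?_, fun x hx => ?_, fun y hy => ?_,
    fun x hx => ?_⟩
  · simp [hslice, hg, p₂.length_slice hjt ht, add_assoc]
  · rw [Walk.getVert_append_of_le _ _ (hslice ▸ hx), p₁.getVert_slice hiq hx]
  · rw [← hslice, Walk.getVert_append_add, Walk.getVert_append_of_le _ _ (hg ▸ hy), ← hg]
    simpa using g.dist_getVert_of_length_eq_dist hg (hg ▸ hy) le_rfl
  · rw [← hslice, ← hg, add_assoc, Walk.getVert_append_add, Walk.getVert_append_add,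
      p₂.getVert_slice hjt hx]

structure AsyncDisjointGeodesics (p₁ : X.Walk u₁ v₁) (p₂ : X.Walk u₂ v₂) (n : ℕ) : Prop where
  length_left : p₁.length = n
  length_right : p₂.length = n
  length_left_eq_dist : p₁.length = X.dist u₁ v₁
  length_right_eq_dist : p₂.length = X.dist u₂ v₂
  getVert_ne : ∀ i j, i ≤ n → j ≤ n → i ≠ j → p₁.getVert i ≠ p₂.getVert j

noncomputable def rungs (p₁ : X.Walk u₁ v₁) (p₂ : X.Walk u₂ v₂) (n m : ℕ) : Finset ℕ :=
  {j ∈ range (n + 1) | X.dist (p₁.getVert j) (p₂.getVert j) = m}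

/-- Rungs `j ≥ i` whose distance from `p₁.getVert i` falls short of the triangle-inequality bound
`(j - i) + m` by exactly `e`. -/
noncomputable def rungsWithDefect (p₁ : X.Walk u₁ v₁) (p₂ : X.Walk u₂ v₂) (n m i e : ℕ) :
    Finset ℕ :=
  {j ∈ rungs p₁ p₂ n m | i ≤ j ∧ X.dist (p₁.getVert i) (p₂.getVert j) + e = j - i + m}

variable {p₁ : X.Walk u₁ v₁} {p₂ : X.Walk u₂ v₂} {n m i j e : ℕ}

lemma mem_rungs : j ∈ rungs p₁ p₂ n m ↔ j ≤ n ∧ X.dist (p₁.getVert j) (p₂.getVert j) = m := by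
  simp [rungs]

lemma mem_rungsWithDefect : j ∈ rungsWithDefect p₁ p₂ n m i e ↔ j ∈ rungs p₁ p₂ n m ∧ i ≤ j ∧
    X.dist (p₁.getVert i) (p₂.getVert j) + e = j - i + m := by
  simp [rungsWithDefect]

lemma exists_max_mem_rungsWithDefect (h : j ∈ rungsWithDefect p₁ p₂ n m i e) (he : 0 < e) :
    ∃ q, i ≤ q ∧ q < j ∧ j ∈ rungsWithDefect p₁ p₂ n m q e ∧
      ∀ x, q < x → j ∉ rungsWithDefect p₁ p₂ n m x e := by
  have hij := (mem_rungsWithDefect.1 h).2.1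
  set P := fun x => j ∈ rungsWithDefect p₁ p₂ n m x e
  have hq : P (Nat.findGreatest P j) := Nat.findGreatest_spec hij h
  refine ⟨Nat.findGreatest P j, Nat.le_findGreatest hij h, ?_, hq, fun x hx hxj => ?_⟩
  · refine (Nat.findGreatest_le j).lt_of_ne fun hj => ?_
    rw [hj] at hq
    simp only [P, mem_rungsWithDefect, mem_rungs] at hq
    omega
  · have hxj' := (mem_rungsWithDefect.1 hxj).2.1
    exact Nat.findGreatest_is_greatest hx hxj' hxj

namespace AsyncDisjointGeodesics

lemma dist_left (L : AsyncDisjointGeodesics p₁ p₂ n) {i j : ℕ} (hij : i ≤ j) (hj : j ≤ n) :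
    X.dist (p₁.getVert i) (p₁.getVert j) = j - i :=
  p₁.dist_getVert_of_length_eq_dist L.length_left_eq_dist hij (L.length_left ▸ hj)

lemma dist_right (L : AsyncDisjointGeodesics p₁ p₂ n) {i j : ℕ} (hij : i ≤ j) (hj : j ≤ n) :
    X.dist (p₂.getVert i) (p₂.getVert j) = j - i :=
  p₂.dist_getVert_of_length_eq_dist L.length_right_eq_dist hij (L.length_right ▸ hj)

lemma mem_rungsWithDefect_of_mem_rungs (hX : X.Connected) (L : AsyncDisjointGeodesics p₁ p₂ n)
    (hj : j ∈ rungs p₁ p₂ n m) (hij : i ≤ j) :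
    j ∈ rungsWithDefect p₁ p₂ n m i (j - i + m - X.dist (p₁.getVert i) (p₂.getVert j)) := by
  have hj' := mem_rungs.1 hj
  have := hX.dist_triangle (u := p₁.getVert i) (v := p₁.getVert j) (w := p₂.getVert j)
  rw [L.dist_left hij hj'.1] at this
  exact mem_rungsWithDefect.2 ⟨hj, hij, by omega⟩

lemma exists_card_rungs_le_sum (hX : X.Connected) (L : AsyncDisjointGeodesics p₁ p₂ n) :
    ∃ i, #(rungs p₁ p₂ n m) ≤ ∑ e ∈ range (2 * m + 1), #(rungsWithDefect p₁ p₂ n m i e) := by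
  rcases (rungs p₁ p₂ n m).eq_empty_or_nonempty with hR | hR
  · exact ⟨0, by simp [hR]⟩
  set i := (rungs p₁ p₂ n m).min' hR
  have hi := mem_rungs.1 ((rungs p₁ p₂ n m).min'_mem hR)
  refine ⟨i, (card_le_card fun j hj => mem_biUnion.2 ?_).trans card_biUnion_le⟩
  have hij : i ≤ j := min'_le _ j hj
  have := hX.dist_triangle (u := p₂.getVert i) (v := p₁.getVert i) (w := p₂.getVert j)
  rw [L.dist_right hij (mem_rungs.1 hj).1, dist_comm, hi.2] at this
  exact ⟨_, mem_range.2 (by omega), L.mem_rungsWithDefect_of_mem_rungs hX hj hij⟩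

lemma exists_lt_mem_rungsWithDefect_succ (hX : X.Connected) (L : AsyncDisjointGeodesics p₁ p₂ n)
    {q : ℕ} (hj : j ∈ rungsWithDefect p₁ p₂ n m q e) (hqj : q < j)
    (hj' : j ∉ rungsWithDefect p₁ p₂ n m (q + 1) e) :
    ∃ e' < e, j ∈ rungsWithDefect p₁ p₂ n m (q + 1) e' := by
  obtain ⟨hjR, -, hd⟩ := mem_rungsWithDefect.1 hj
  have hmem := L.mem_rungsWithDefect_of_mem_rungs hX hjR (i := q + 1) hqj
  refine ⟨_, ?_, hmem⟩
  have := hX.dist_triangle (u := p₁.getVert q) (v := p₁.getVert (q + 1)) (w := p₂.getVert j)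
  rw [L.dist_left (Nat.le_succ q) (hqj.trans_le (mem_rungs.1 hjR).1)] at this
  have hne : X.dist (p₁.getVert (q + 1)) (p₂.getVert j) + e ≠ j - (q + 1) + m :=
    fun h => hj' (mem_rungsWithDefect.2 ⟨hjR, hqj, h⟩)
  have := (mem_rungsWithDefect.1 hmem).2.2
  omega

lemma exists_geodesic_crossing (hX : X.Connected) (L : AsyncDisjointGeodesics p₁ p₂ n) {q t : ℕ}
    (hiq : i ≤ q) (hj : j ∈ rungsWithDefect p₁ p₂ n m q e) (hjt : j ≤ t)
    (ht : t ∈ rungsWithDefect p₁ p₂ n m i e) :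
    ∃ W : X.Walk (p₁.getVert i) (p₂.getVert t),
      W.length = X.dist (p₁.getVert i) (p₂.getVert t) ∧
      (∀ x ≤ q - i, W.getVert x = p₁.getVert (i + x)) ∧
      (∀ y ≤ X.dist (p₁.getVert q) (p₂.getVert j), X.dist (W.getVert (q - i + y)) (p₂.getVert j) =
        X.dist (p₁.getVert q) (p₂.getVert j) - y) ∧
      ∀ x ≤ t - j, W.getVert (q - i + X.dist (p₁.getVert q) (p₂.getVert j) + x) =
        p₂.getVert (j + x) := by
  obtain ⟨hjR, hqj, hd⟩ := mem_rungsWithDefect.1 hj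
  obtain ⟨htR, -, hdt⟩ := mem_rungsWithDefect.1 ht
  have hjn := (mem_rungs.1 hjR).1
  obtain ⟨W, hlen, hW⟩ := hX.exists_walk_crossing p₁ p₂ hiq (L.length_left ▸ hqj.trans hjn) hjt
    (L.length_right ▸ (mem_rungs.1 htR).1)
  exact ⟨W, by omega, hW⟩

lemma card_rungsWithDefect_zero_le {k : ℕ} (hX : IsKGeodetic X k)
    (L : AsyncDisjointGeodesics p₁ p₂ n) (hm : 0 < m) :
    #(rungsWithDefect p₁ p₂ n m i 0) ≤ m * k := by
  classical
  set R := rungsWithDefect p₁ p₂ n m i 0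
  rcases R.eq_empty_or_nonempty with hR | hR
  · simp [hR]
  obtain ⟨t, htR, hmax⟩ : ∃ t ∈ R, ∀ j ∈ R, j ≤ t := ⟨_, R.max'_mem hR, R.le_max'⟩
  have : Nonempty (X.Walk (p₁.getVert i) (p₂.getVert t)) := hX.1.preconnected _ _
  have hW : ∀ j ∈ R, ∃ W : X.Walk (p₁.getVert i) (p₂.getVert t),
      W.length = X.dist (p₁.getVert i) (p₂.getVert t) ∧
      (∀ x ≤ j - i, W.getVert x = p₁.getVert (i + x)) ∧
      ∀ x ≤ t - j, W.getVert (j - i + m + x) = p₂.getVert (j + x) := by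
    intro j hj
    obtain ⟨hjR, hij, -⟩ := mem_rungsWithDefect.1 hj
    have hjm := (mem_rungs.1 hjR).2
    obtain ⟨W, hlen, hleft, -, hright⟩ := L.exists_geodesic_crossing hX.1 hij
      (mem_rungsWithDefect.2 ⟨hjR, le_rfl, by rw [hjm]; simp⟩) (hmax j hj) htR
    rw [hjm] at hright
    exact ⟨W, hlen, hleft, hright⟩
  choose! W hW using hW
  refine hX.card_le_mul W (fun j hj => (hW j hj).1) fun j hj =>
    card_le_of_forall_lt_add hm fun a ha b hb hab => ?_
  obtain ⟨haR, hWa⟩ := mem_filter.1 ha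
  obtain ⟨hbR, hWb⟩ := mem_filter.1 hb
  have hia := (mem_rungsWithDefect.1 haR).2.1
  have hbn := (mem_rungs.1 (mem_rungsWithDefect.1 hbR).1).1
  have hbt : b ≤ t := hmax b hbR
  by_contra! hba
  -- at position `b - i` the common geodesic visits both `p₁.getVert b` and `p₂.getVert (b - m)`
  have h := (hW a haR).2.2 (b - a - m) (by omega)
  rw [show a - i + m + (b - a - m) = b - i by omega, hWa, ← hWb, (hW b hbR).2.1 (b - i) le_rfl,
    show i + (b - i) = b by omega, show a + (b - a - m) = b - m by omega] at h
  exact L.getVert_ne b (b - m) hbn (by omega) (by omega) h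

lemma card_rungsWithDefect_le_of_pos {k : ℕ} (hX : IsKGeodetic X k)
    (L : AsyncDisjointGeodesics p₁ p₂ n) (he : 0 < e) (B : ℕ → ℕ)
    (IH : ∀ e' < e, ∀ i', #(rungsWithDefect p₁ p₂ n m i' e') ≤ B e') :
    #(rungsWithDefect p₁ p₂ n m i e) ≤ (∑ e' ∈ range e, B e') * k := by
  classical
  set R := rungsWithDefect p₁ p₂ n m i e
  rcases R.eq_empty_or_nonempty with hR | hR
  · simp [hR]
  obtain ⟨t, htR, hmax⟩ : ∃ t ∈ R, ∀ j ∈ R, j ≤ t := ⟨_, R.max'_mem hR, R.le_max'⟩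
  have : Nonempty (X.Walk (p₁.getVert i) (p₂.getVert t)) := hX.1.preconnected _ _
  choose! q hq using fun j (hj : j ∈ R) => exists_max_mem_rungsWithDefect hj he
  have hW : ∀ j ∈ R, ∃ W : X.Walk (p₁.getVert i) (p₂.getVert t),
      W.length = X.dist (p₁.getVert i) (p₂.getVert t) ∧
      (∀ x ≤ q j - i, W.getVert x = p₁.getVert (i + x)) ∧
      X.dist (W.getVert (q j - i + 1)) (p₂.getVert j) + e = j - (q j + 1) + m := by
    intro j hj
    obtain ⟨hiq, hqj, hjq, -⟩ := hq j hj
    obtain ⟨hjR, -, hd⟩ := mem_rungsWithDefect.1 hjq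
    have hjn := (mem_rungs.1 hjR).1
    have hpos : 0 < X.dist (p₁.getVert (q j)) (p₂.getVert j) :=
      hX.1.pos_dist_of_ne (L.getVert_ne _ _ (by omega) hjn hqj.ne)
    obtain ⟨W, hlen, hleft, hmid, -⟩ :=
      L.exists_geodesic_crossing hX.1 hiq hjq (hmax j hj) htR
    exact ⟨W, hlen, hleft, by rw [hmid 1 hpos]; omega⟩
  choose! W hW using hW
  have hq_le : ∀ a ∈ R, ∀ b ∈ R, W a = W b → q a ≤ q b := by
    intro a ha b hb hWab
    -- otherwise the common geodesic runs along `p₁` past `q b`, contradicting its maximality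
    by_contra! hba
    obtain ⟨hib, hqb, hbq, hlast⟩ := hq b hb
    have h := (hW b hb).2.2
    rw [← hWab, (hW a ha).2.1 _ (by omega), show i + (q b - i + 1) = q b + 1 by omega] at h
    exact hlast (q b + 1) (Nat.lt_succ_self _)
      (mem_rungsWithDefect.2 ⟨(mem_rungsWithDefect.1 hbq).1, hqb, h⟩)
  refine hX.card_le_mul W (fun j hj => (hW j hj).1) fun j hj => ?_
  calc #{a ∈ R | W a = W j}
      ≤ #((range e).biUnion (rungsWithDefect p₁ p₂ n m (q j + 1))) := by
        refine card_le_card fun a ha => mem_biUnion.2 ?_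
        obtain ⟨haR, hWa⟩ := mem_filter.1 ha
        have hqa : q a = q j := (hq_le a haR j hj hWa).antisymm (hq_le j hj a haR hWa.symm)
        obtain ⟨-, hlt, hmem, hlast⟩ := hq a haR
        rw [hqa] at hlt hmem hlast
        obtain ⟨e', he', h⟩ := L.exists_lt_mem_rungsWithDefect_succ hX.1 hmem hlt
          (hlast _ (Nat.lt_succ_self _))
        exact ⟨e', mem_range.2 he', h⟩
    _ ≤ ∑ e' ∈ range e, #(rungsWithDefect p₁ p₂ n m (q j + 1) e') := card_biUnion_le
    _ ≤ ∑ e' ∈ range e, B e' := sum_le_sum fun e' he' => IH e' (mem_range.1 he') _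

theorem card_rungsWithDefect_le {k : ℕ} (hX : IsKGeodetic X k)
    (L : AsyncDisjointGeodesics p₁ p₂ n) (hm : 0 < m) (e i : ℕ) :
    #(rungsWithDefect p₁ p₂ n m i e) ≤ m * k * (k + 1) ^ e := by
  induction e using Nat.strong_induction_on generalizing i with
  | _ e IH =>
  rcases Nat.eq_zero_or_pos e with rfl | he
  · simpa using L.card_rungsWithDefect_zero_le hX hm
  calc #(rungsWithDefect p₁ p₂ n m i e)
      ≤ (∑ e' ∈ range e, m * k * (k + 1) ^ e') * k :=
        L.card_rungsWithDefect_le_of_pos hX he _ IH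
    _ = m * k * ((∑ e' ∈ range e, (k + 1) ^ e') * k) := by rw [← mul_sum]; ring
    _ ≤ m * k * (k + 1) ^ e := by
        gcongr
        rw [← geom_sum_mul_add k e]
        exact Nat.le_succ _

end AsyncDisjointGeodesics

end SimpleGraph

open SimpleGraph

theorem ladder_height_bound_general {V : Type*} (X : SimpleGraph V) (m k : ℕ)
    (hm : 0 < m) (hX : IsKGeodetic X k)
    {u₁ v₁ u₂ v₂ : V} (n : ℕ)
    (p₁ : X.Walk u₁ v₁) (p₂ : X.Walk u₂ v₂)
    (hn₁ : p₁.length = n) (hn₂ : p₂.length = n)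
    (hgeo₁ : p₁.length = X.dist u₁ v₁) (hgeo₂ : p₂.length = X.dist u₂ v₂)
    (hdisj : ∀ i j, i ≤ n → j ≤ n → i ≠ j → p₁.getVert i ≠ p₂.getVert j) :
    ((Finset.range (n + 1)).filter
        (fun i => X.dist (p₁.getVert i) (p₂.getVert i) = m)).card
      ≤ m * (k * ∏ i ∈ Finset.Icc 2 (2 * m + 1), (i * k + 1)) := by
  have L : AsyncDisjointGeodesics p₁ p₂ n := ⟨hn₁, hn₂, hgeo₁, hgeo₂, hdisj⟩
  obtain ⟨i, hi⟩ := L.exists_card_rungs_le_sum hX.1 (m := m)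
  calc #(rungs p₁ p₂ n m)
      ≤ ∑ e ∈ range (2 * m + 1), #(rungsWithDefect p₁ p₂ n m i e) := hi
    _ ≤ ∑ e ∈ range (2 * m + 1), m * k * (k + 1) ^ e :=
        sum_le_sum fun e _ => L.card_rungsWithDefect_le hX hm e i
    _ = m * ((∑ e ∈ range (2 * m + 1), (k + 1) ^ e) * k) := by rw [← mul_sum]; ring
    _ ≤ m * (k * ∏ i ∈ Icc 2 (2 * m + 1), (i * k + 1)) :=
        Nat.mul_le_mul_left m (geom_sum_mul_le_prod k (2 * m))

/-- With `A(m,k) = m · k · ∏_{i=2}^{2m+1} (i k + 1)`, in any `k`-geodetic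
graph a ladder-like structure of width `m` has height at most `A(m,k)`: for any pair of
asynchronously disjoint geodesics `p₁, p₂` of the same length `n`, the number of indices
`i ∈ {0, …, n}` at which the two geodesics are `m`-apart is at most `A(m,k)`. -/
theorem ladder_height_bound {V : Type*} (X : SimpleGraph V) (m k : ℕ)
    (hm : 0 < m) (hk : 0 < k) (hX : IsKGeodetic X k)
    {u₁ v₁ u₂ v₂ : V} (n : ℕ)
    (p₁ : X.Walk u₁ v₁) (p₂ : X.Walk u₂ v₂)
    (hn₁ : p₁.length = n) (hn₂ : p₂.length = n)
    (hgeo₁ : p₁.length = X.dist u₁ v₁) (hgeo₂ : p₂.length = X.dist u₂ v₂)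
    (hdisj : ∀ i j, i ≤ n → j ≤ n → i ≠ j → p₁.getVert i ≠ p₂.getVert j) :
    ((Finset.range (n + 1)).filter
        (fun i => X.dist (p₁.getVert i) (p₂.getVert i) = m)).card
      ≤ m * (k * ∏ i ∈ Finset.Icc 2 (2 * m + 1), (i * k + 1)) :=
  ladder_height_bound_general X m k hm hX n p₁ p₂ hn₁ hn₂ hgeo₁ hgeo₂ hdisj
end

section
/- Let m and k be positive integers. There exists a constant C(m,k) (one may take C(m,k) = m · A(m,k) where A(m,k) = m · k · ∏_{i=2}^{2m+1}(ik+1)) such that in any k-geodetic graph, for any pair of asynchronously disjoint geodesics γ₁, γ₂ of the same length n, the number of indices i ∈ {0,...,n} with 1 ≤ d(γ₁(i), γ₂(i)) ≤ m is at most C(m,k). -/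
/-!
Fix `d ≥ 1`, write `γᵢ = pᵢ.getVert`, and let `T` be a set of indices `t` with
`d(γ₁ t, γ₂ t) = d`. Call `T` `c`-spread if `d(γ₁ a, γ₂ b) + c > b - a + d` for all `a < b`
in `T`; since `γ₂` is a geodesic, every such `T` is `(2d+1)`-spread, and we bound `c`-spread
sets by induction on `c`.

Let `s = max T`. Every other `t ∈ T` is anchored at `s` with a defect `c' < c`, meaning
`d(γ₁ t, γ₂ s) + c' = s - t + d`. Fix `c'` and let `t₀` be the least index of defect `c'`.
Each such `t` gives a walk from `γ₁ t₀` to `γ₂ s`: along `γ₁` to `t`, by a geodesic to the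
first `γ₂ j` at which `t` is already anchored with defect `c'` (its jump), then along `γ₂`.
The anchoring makes all these walks geodesics, so `k`-geodeticity leaves at most `k` of them.
If `a < b` produce the same walk, `γ₁ b` lies on it; by asynchronous disjointness it lies on the
geodesic part, which forces `a, b` to be `c'`-spread unless `b` is among the `d - c'` indices
just after the jump of `a`. A greedy choice then extracts a `c'`-spread subset, losing a factor
`d - c' + 1`. The resulting recursion `|T| ≤ 1 + Σ_{c' < c} k (d - c' + 1) B(c')` is solved by
`B(c) = ∏_{j < c} (k (d - j + 1) + 1)`.
-/

open Finset

theorem Finset.exists_subset_pairwise_card_le_mul {α : Type*} [LinearOrder α]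
    (r : α → α → Prop) [DecidableRel r] (w : ℕ) (s : Finset α)
    (h : ∀ a ∈ s, #{b ∈ s | a < b ∧ ¬ r a b} ≤ w) :
    ∃ t ⊆ s, (∀ a ∈ t, ∀ b ∈ t, a < b → r a b) ∧ #s ≤ (w + 1) * #t := by
  induction s using Finset.strongInduction with
  | H s ih =>
  rcases s.eq_empty_or_nonempty with rfl | hs
  · exact ⟨∅, subset_rfl, by simp, by simp⟩
  set a := s.min' hs
  set bad := {b ∈ s | a < b ∧ ¬ r a b}
  have hbad : bad ⊆ s.erase a := fun b hb ↦ by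
    simp only [bad, mem_filter] at hb
    exact mem_erase.2 ⟨hb.2.1.ne', hb.1⟩
  have hsub : s.erase a \ bad ⊆ s := sdiff_subset.trans (erase_subset a s)
  obtain ⟨t, hts, hrt, hcard⟩ := ih (s.erase a \ bad)
    (ssubset_of_subset_of_ssubset sdiff_subset (erase_ssubset (s.min'_mem hs)))
    fun x hx ↦ (card_le_card (filter_subset_filter _ hsub)).trans (h x (hsub hx))
  have hat : a ∉ t := fun ha ↦ by simpa using hts ha
  refine ⟨insert a t, insert_subset (s.min'_mem hs) (hts.trans hsub), ?_, ?_⟩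
  · intro x hx y hy hxy
    rcases mem_insert.1 hx with rfl | hx <;> rcases mem_insert.1 hy with rfl | hy
    · exact absurd hxy (lt_irrefl _)
    · have := hts hy
      simp only [mem_sdiff, mem_erase, bad, mem_filter, not_and, not_not] at this
      exact this.2 this.1.2 hxy
    · exact absurd (s.min'_le _ (hsub (hts hx))) (not_le.2 hxy)
    · exact hrt x hx y hy hxy
  · have h1 := card_sdiff_add_card_eq_card hbad
    have h2 := card_erase_add_one (s.min'_mem hs)
    rw [card_insert_of_notMem hat]
    nlinarith [h a (s.min'_mem hs)]

theorem IsKGeodetic.card_le_mul_of_fiber_card_le {V ι : Type*} {X : SimpleGraph V} {k B : ℕ}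
    (hX : IsKGeodetic X k) {x y : V} (W : ι → X.Walk x y) (T : Finset ι)
    (hW : ∀ i ∈ T, (W i).length = X.dist x y)
    (hB : ∀ F ⊆ T, (∀ i ∈ F, ∀ j ∈ F, W i = W j) → #F ≤ B) : #T ≤ k * B := by
  classical
  have himage : #(T.image W) ≤ k := hX.2 x y _ (by simpa using hW)
  calc #T ≤ B * #(T.image W) := card_le_mul_card_image T B fun w _ ↦
          hB _ (filter_subset _ _) (by simp +contextual)
    _ ≤ B * k := Nat.mul_le_mul_left B himage
    _ = k * B := mul_comm B k

namespace SimpleGraph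

variable {V : Type*} {X : SimpleGraph V}

theorem Walk.dist_getVert_le {u v : V} (p : X.Walk u v) {i j : ℕ} (hij : i ≤ j) :
    X.dist (p.getVert i) (p.getVert j) ≤ j - i := by
  have := dist_le ((p.drop i).take (j - i))
  simp only [take_length, drop_getVert, Nat.add_sub_cancel' hij] at this
  omega

theorem Walk.dist_getVert_of_length_eq_dist_s2 {u v : V} {p : X.Walk u v}
    (hp : p.length = X.dist u v) {i j : ℕ} (hij : i ≤ j) (hj : j ≤ p.length) :
    X.dist (p.getVert i) (p.getVert j) = j - i := by
  have := length_eq_dist_of_subwalk hp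
    (((p.drop i).isSubwalk_take (j - i)).trans (p.isSubwalk_drop i))
  simp only [take_length, drop_getVert, drop_length, Nat.add_sub_cancel' hij] at this
  omega

theorem Walk.dist_getVert_add_of_length_eq_dist {u v : V} {p : X.Walk u v}
    (hp : p.length = X.dist u v) {i : ℕ} (hi : i ≤ p.length) :
    X.dist (p.getVert i) v + i = X.dist u v := by
  have := dist_getVert_of_length_eq_dist_s2 hp hi le_rfl
  rw [getVert_length] at this
  omega

theorem Connected.dist_getVert_le_add (hconn : X.Connected) {u v : V} (p : X.Walk u v) (x : V)
    {i j : ℕ} (hij : i ≤ j) :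
    X.dist x (p.getVert j) ≤ X.dist x (p.getVert i) + (j - i) :=
  hconn.dist_triangle.trans (Nat.add_le_add_left (p.dist_getVert_le hij) _)

noncomputable def Connected.geodesic (hconn : X.Connected) (u v : V) : X.Walk u v :=
  (hconn.exists_walk_length_eq_dist u v).choose

theorem Connected.length_geodesic (hconn : X.Connected) (u v : V) :
    (hconn.geodesic u v).length = X.dist u v :=
  (hconn.exists_walk_length_eq_dist u v).choose_spec

variable {u₁ v₁ u₂ v₂ : V}

noncomputable def detour (hconn : X.Connected) (p₁ : X.Walk u₁ v₁) (p₂ : X.Walk u₂ v₂)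
    (t r j s : ℕ) : X.Walk (p₁.getVert t) (p₂.getVert s) :=
  ((p₁.drop t).take (r - t)).append ((hconn.geodesic _ _).append ((p₂.take s).drop j))

section Detour

variable (hconn : X.Connected) (p₁ : X.Walk u₁ v₁) (p₂ : X.Walk u₂ v₂) {t r j s : ℕ}

theorem length_detour (htr : t ≤ r) (hr : r ≤ p₁.length) (hjs : j ≤ s) (hs : s ≤ p₂.length) :
    (detour hconn p₁ p₂ t r j s).length =
      r - t + X.dist (p₁.getVert r) (p₂.getVert j) + (s - j) := by
  simp only [detour, Walk.length_append, Walk.take_length, Walk.drop_length,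
    Connected.length_geodesic, Walk.drop_getVert, Nat.add_sub_cancel' htr, Walk.take_getVert,
    min_eq_right hjs]
  omega

theorem getVert_detour_add (htr : t ≤ r) (hr : r ≤ p₁.length) (i : ℕ) :
    (detour hconn p₁ p₂ t r j s).getVert (r - t + i) =
      ((hconn.geodesic ((p₁.drop t).getVert (r - t)) ((p₂.take s).getVert j)).append
        ((p₂.take s).drop j)).getVert i := by
  have hhead : ((p₁.drop t).take (r - t)).length = r - t := by
    simp only [Walk.take_length, Walk.drop_length]
    omega
  rw [detour, Walk.getVert_append, hhead, if_neg (by omega), Nat.add_sub_cancel_left]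

theorem getVert_detour_sub (htr : t ≤ r) (hr : r ≤ p₁.length) :
    (detour hconn p₁ p₂ t r j s).getVert (r - t) = p₁.getVert r := by
  simpa [Nat.add_sub_cancel' htr] using getVert_detour_add hconn p₁ p₂ (j := j) (s := s) htr hr 0

theorem dist_getVert_detour_add (htr : t ≤ r) (hr : r ≤ p₁.length) (hjs : j ≤ s) {i : ℕ}
    (hi : i ≤ X.dist (p₁.getVert r) (p₂.getVert j)) :
    X.dist ((detour hconn p₁ p₂ t r j s).getVert (r - t + i)) (p₂.getVert j) + i =
      X.dist (p₁.getVert r) (p₂.getVert j) := by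
  have hg := hconn.length_geodesic ((p₁.drop t).getVert (r - t)) ((p₂.take s).getVert j)
  have key := Walk.dist_getVert_add_of_length_eq_dist hg (i := i)
  simp only [Walk.drop_getVert, Walk.take_getVert, Nat.add_sub_cancel' htr,
    min_eq_right hjs] at hg key
  rw [getVert_detour_add hconn p₁ p₂ htr hr, Walk.getVert_append', if_pos (by omega)]
  exact key (by omega)

theorem exists_getVert_detour_add (htr : t ≤ r) (hr : r ≤ p₁.length) (hjs : j ≤ s) {i : ℕ}
    (hi : X.dist (p₁.getVert r) (p₂.getVert j) ≤ i) :
    ∃ q ≤ s, (detour hconn p₁ p₂ t r j s).getVert (r - t + i) = p₂.getVert q := by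
  have hg := hconn.length_geodesic ((p₁.drop t).getVert (r - t)) ((p₂.take s).getVert j)
  simp only [Walk.drop_getVert, Walk.take_getVert, Nat.add_sub_cancel' htr,
    min_eq_right hjs] at hg
  rw [getVert_detour_add hconn p₁ p₂ htr hr, Walk.getVert_append']
  split_ifs with h
  · rw [show i = (hconn.geodesic ((p₁.drop t).getVert (r - t)) ((p₂.take s).getVert j)).length
      by omega, Walk.getVert_length, Walk.take_getVert, min_eq_right hjs]
    exact ⟨j, hjs, rfl⟩
  · simp only [Walk.drop_getVert, Walk.take_getVert]
    exact ⟨_, min_le_left _ _, rfl⟩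

end Detour

structure Walk.IsAsyncDisjoint (p₁ : X.Walk u₁ v₁) (p₂ : X.Walk u₂ v₂) : Prop where
  length_eq : p₁.length = p₂.length
  getVert_ne : ∀ i j, i ≤ p₂.length → j ≤ p₂.length → i ≠ j → p₁.getVert i ≠ p₂.getVert j

theorem Walk.IsAsyncDisjoint.getVert_ne_of_dist_ne_zero {p₁ : X.Walk u₁ v₁} {p₂ : X.Walk u₂ v₂}
    (h : p₁.IsAsyncDisjoint p₂) {i j : ℕ} (hi : i ≤ p₂.length) (hj : j ≤ p₂.length)
    (hd : X.dist (p₁.getVert i) (p₂.getVert i) ≠ 0) : p₁.getVert i ≠ p₂.getVert j := by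
  rcases eq_or_ne i j with rfl | hij
  · exact fun heq ↦ hd (by rw [heq, dist_self])
  · exact h.getVert_ne i j hi hj hij

noncomputable def indicesAtDist (p₁ : X.Walk u₁ v₁) (p₂ : X.Walk u₂ v₂) (d : ℕ) : Finset ℕ :=
  {i ∈ range (p₂.length + 1) | X.dist (p₁.getVert i) (p₂.getVert i) = d}

theorem mem_indicesAtDist {p₁ : X.Walk u₁ v₁} {p₂ : X.Walk u₂ v₂} {d i : ℕ} :
    i ∈ indicesAtDist p₁ p₂ d ↔ i ≤ p₂.length ∧ X.dist (p₁.getVert i) (p₂.getVert i) = d := by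
  simp [indicesAtDist]

def IsAnchored (p₁ : X.Walk u₁ v₁) (p₂ : X.Walk u₂ v₂) (d c r j : ℕ) : Prop :=
  X.dist (p₁.getVert r) (p₂.getVert j) + c = j - r + d

def IsSpread (p₁ : X.Walk u₁ v₁) (p₂ : X.Walk u₂ v₂) (d c : ℕ) (T : Finset ℕ) : Prop :=
  ∀ a ∈ T, ∀ b ∈ T, a < b → b - a + d < X.dist (p₁.getVert a) (p₂.getVert b) + c

noncomputable def jump (p₁ : X.Walk u₁ v₁) (p₂ : X.Walk u₂ v₂) (d c s r : ℕ) : ℕ :=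
  sInf {j | r ≤ j ∧ j ≤ s ∧ IsAnchored p₁ p₂ d c r j}

def spreadBound (k d c : ℕ) : ℕ :=
  ∏ j ∈ range c, (k * (d - j + 1) + 1)

theorem spreadBound_eq_one_add_sum (k d c : ℕ) :
    spreadBound k d c = 1 + ∑ j ∈ range c, k * ((d - j + 1) * spreadBound k d j) := by
  induction c with
  | zero => simp [spreadBound]
  | succ c ih =>
    rw [sum_range_succ, ← add_assoc, ← ih, spreadBound, prod_range_succ, ← spreadBound]
    ring

section Anchored

variable {p₁ : X.Walk u₁ v₁} {p₂ : X.Walk u₂ v₂} {k d c r s : ℕ}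

theorem jump_spec (hrs : r ≤ s) (h : IsAnchored p₁ p₂ d c r s) :
    r ≤ jump p₁ p₂ d c s r ∧ jump p₁ p₂ d c s r ≤ s ∧
      IsAnchored p₁ p₂ d c r (jump p₁ p₂ d c s r) :=
  Nat.sInf_mem (s := {j | r ≤ j ∧ j ≤ s ∧ IsAnchored p₁ p₂ d c r j}) ⟨s, hrs, le_rfl, h⟩

theorem jump_le {j : ℕ} (hrj : r ≤ j) (hjs : j ≤ s) (h : IsAnchored p₁ p₂ d c r j) :
    jump p₁ p₂ d c s r ≤ j :=
  Nat.sInf_le ⟨hrj, hjs, h⟩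

theorem length_detour_jump_eq_dist (hconn : X.Connected) {t : ℕ} (ht : IsAnchored p₁ p₂ d c t s)
    (htr : t ≤ r) (hrs : r ≤ s) (hs : s ≤ p₂.length) (hlen : p₁.length = p₂.length)
    (hr : IsAnchored p₁ p₂ d c r s) :
    (detour hconn p₁ p₂ t r (jump p₁ p₂ d c s r) s).length =
      X.dist (p₁.getVert t) (p₂.getVert s) := by
  obtain ⟨hrJ, hJs, hJ⟩ := jump_spec hrs hr
  rw [length_detour hconn p₁ p₂ htr (by omega) hJs hs]
  unfold IsAnchored at ht hJ
  omega

theorem lt_dist_add_or_jump_lt_of_detour_eq (hconn : X.Connected)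
    (hγ : p₁.IsAsyncDisjoint p₂) (hs : s ≤ p₂.length) {t a b j : ℕ} (hta : t ≤ a) (hab : a < b)
    (hbs : b < s) (ha : X.dist (p₁.getVert a) (p₂.getVert a) = d)
    (hb : X.dist (p₁.getVert b) (p₂.getVert b) = d) (hd : d ≠ 0)
    (haA : IsAnchored p₁ p₂ d c a s)
    (heq : detour hconn p₁ p₂ t a (jump p₁ p₂ d c s a) s = detour hconn p₁ p₂ t b j s) :
    b - a + d < X.dist (p₁.getVert a) (p₂.getVert b) + c ∨
      (jump p₁ p₂ d c s a < b ∧ b < jump p₁ p₂ d c s a + (d - c)) := by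
  have hmin : ∀ j', a ≤ j' → j' ≤ s → IsAnchored p₁ p₂ d c a j' → jump p₁ p₂ d c s a ≤ j' :=
    fun _ ↦ jump_le
  obtain ⟨haJ, hJs, hJ⟩ := jump_spec (hab.trans hbs).le haA
  set J := jump p₁ p₂ d c s a
  have hlen := hγ.length_eq
  have hvb : (detour hconn p₁ p₂ t a J s).getVert (a - t + (b - a)) = p₁.getVert b := by
    rw [heq, show a - t + (b - a) = b - t by omega]
    exact getVert_detour_sub hconn p₁ p₂ (by omega) (by omega)
  rcases le_or_gt (X.dist (p₁.getVert a) (p₂.getVert J)) (b - a) with hfar | hnear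
  · obtain ⟨q, hq, hbq⟩ := exists_getVert_detour_add hconn p₁ p₂ hta (by omega) hJs hfar
    exact absurd (hvb ▸ hbq) (hγ.getVert_ne_of_dist_ne_zero (by omega) (by omega) (by omega))
  have hbJ := dist_getVert_detour_add hconn p₁ p₂ hta (by omega) hJs hnear.le
  rw [hvb] at hbJ
  unfold IsAnchored at hJ haA
  rcases lt_or_ge J b with hJb | hbJ'
  · exact Or.inr ⟨hJb, by omega⟩
  left
  have hlow := hconn.dist_getVert_le_add p₂ (p₁.getVert a) hbs.le
  refine lt_of_le_of_ne (by omega) fun hab' ↦ ?_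
  -- Equality would anchor `a` at `b`, so `J = b`; then `c = 0`, so `a` is anchored at `a < J`.
  have hJeq : J = b := le_antisymm (hmin b hab.le hbs.le (by unfold IsAnchored; omega)) hbJ'
  rw [hJeq, hb] at hbJ
  have := hmin a le_rfl (hab.trans hbs).le (by unfold IsAnchored; omega)
  omega

theorem card_le_of_isAnchored {β : ℕ} (hX : IsKGeodetic X k) (hγ : p₁.IsAsyncDisjoint p₂)
    (hd : d ≠ 0) (hs : s ≤ p₂.length) {T : Finset ℕ} (hT : T ⊆ indicesAtDist p₁ p₂ d)
    (hTs : ∀ t ∈ T, t < s ∧ IsAnchored p₁ p₂ d c t s)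
    (hβ : ∀ F ⊆ T, IsSpread p₁ p₂ d c F → #F ≤ β) :
    #T ≤ k * ((d - c + 1) * β) := by
  rcases T.eq_empty_or_nonempty with rfl | hne
  · simp
  have hmem : ∀ t ∈ T, t ≤ p₂.length ∧ X.dist (p₁.getVert t) (p₂.getVert t) = d :=
    fun t ht ↦ mem_indicesAtDist.1 (hT ht)
  set t₀ := T.min' hne
  refine hX.card_le_mul_of_fiber_card_le
    (fun r ↦ detour hX.1 p₁ p₂ t₀ r (jump p₁ p₂ d c s r) s) T
    (fun r hr ↦ length_detour_jump_eq_dist hX.1 (hTs _ (T.min'_mem hne)).2 (T.min'_le r hr)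
      (hTs r hr).1.le hs hγ.length_eq (hTs r hr).2) fun F hFT hF ↦ ?_
  obtain ⟨G, hGF, hG, hcard⟩ := exists_subset_pairwise_card_le_mul
    (fun a b ↦ b - a + d < X.dist (p₁.getVert a) (p₂.getVert b) + c) (d - c) F fun a ha ↦ by
      refine (card_le_card fun b hb ↦ ?_).trans
        ((Nat.card_Ioo (jump p₁ p₂ d c s a) (jump p₁ p₂ d c s a + (d - c))).le.trans (by omega))
      obtain ⟨hbF, hab, hnot⟩ := mem_filter.1 hb
      have haT := hFT ha
      have hbT := hFT hbF
      exact mem_Ioo.2 ((lt_dist_add_or_jump_lt_of_detour_eq hX.1 hγ hs (T.min'_le a haT) hab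
        (hTs b hbT).1 (hmem a haT).2 (hmem b hbT).2 hd (hTs a haT).2 (hF a ha b hbF)).resolve_left
        hnot)
  exact hcard.trans (Nat.mul_le_mul_left _ (hβ G (hGF.trans hFT) hG))

theorem card_le_spreadBound (hX : IsKGeodetic X k) (hγ : p₁.IsAsyncDisjoint p₂) (hd : d ≠ 0)
    (c : ℕ) {T : Finset ℕ} (hT : T ⊆ indicesAtDist p₁ p₂ d) (hspread : IsSpread p₁ p₂ d c T) :
    #T ≤ spreadBound k d c := by
  classical
  induction c using Nat.strong_induction_on generalizing T with
  | _ c ih =>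
  rcases T.eq_empty_or_nonempty with rfl | hne
  · simp
  set s := T.max' hne
  have hsT : s ∈ T := T.max'_mem hne
  have hmem : ∀ t ∈ T, t ≤ p₂.length ∧ X.dist (p₁.getVert t) (p₂.getVert t) = d :=
    fun t ht ↦ mem_indicesAtDist.1 (hT ht)
  set piece : ℕ → Finset ℕ := fun c' ↦ {t ∈ T.erase s | IsAnchored p₁ p₂ d c' t s}
  have hcover : T.erase s ⊆ (range c).biUnion piece := fun t ht ↦ by
    obtain ⟨hts, htT⟩ := mem_erase.1 ht
    have hlt : t < s := lt_of_le_of_ne (T.le_max' t htT) hts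
    have hup := hX.1.dist_getVert_le_add p₂ (p₁.getVert t) hlt.le
    have := hspread t htT s hsT hlt
    rw [(hmem t htT).2] at hup
    refine mem_biUnion.2 ⟨s - t + d - X.dist (p₁.getVert t) (p₂.getVert s),
      mem_range.2 (by omega), ?_⟩
    exact mem_filter.2 ⟨ht, by unfold IsAnchored; omega⟩
  have hpiece : ∀ c' ∈ range c, #(piece c') ≤ k * ((d - c' + 1) * spreadBound k d c') :=
    fun c' hc' ↦ card_le_of_isAnchored hX hγ hd (hmem s hsT).1
      ((filter_subset _ _).trans ((erase_subset _ _).trans hT))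
      (fun t ht ↦ by
        obtain ⟨htT, hanch⟩ := mem_filter.1 ht
        exact ⟨lt_of_le_of_ne (T.le_max' t (mem_of_mem_erase htT)) (ne_of_mem_erase htT), hanch⟩)
      fun F hF hFs ↦ ih c' (mem_range.1 hc') (hF.trans ((filter_subset _ _).trans
        ((erase_subset _ _).trans hT))) hFs
  calc #T = #(T.erase s) + 1 := (card_erase_add_one hsT).symm
    _ ≤ ∑ c' ∈ range c, #(piece c') + 1 :=
        Nat.add_le_add_right ((card_le_card hcover).trans card_biUnion_le) 1
    _ ≤ ∑ c' ∈ range c, k * ((d - c' + 1) * spreadBound k d c') + 1 :=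
        Nat.add_le_add_right (sum_le_sum hpiece) 1
    _ = spreadBound k d c := by rw [spreadBound_eq_one_add_sum, add_comm]

theorem card_indicesAtDist_le (hX : IsKGeodetic X k) (hp₂ : p₂.length = X.dist u₂ v₂)
    (hγ : p₁.IsAsyncDisjoint p₂) (hd : d ≠ 0) :
    #(indicesAtDist p₁ p₂ d) ≤ spreadBound k d (2 * d + 1) := by
  refine card_le_spreadBound hX hγ hd _ subset_rfl fun a ha b hb hab ↦ ?_
  rw [mem_indicesAtDist] at ha hb
  have h₂ := p₂.dist_getVert_of_length_eq_dist_s2 hp₂ hab.le (by omega)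
  have htri := hX.1.dist_triangle (u := p₂.getVert a) (v := p₁.getVert a) (w := p₂.getVert b)
  have hcomm : X.dist (p₂.getVert a) (p₁.getVert a) = d := by rw [dist_comm, ha.2]
  omega

end Anchored

theorem spreadBound_two_mul_add_one_succ (k d : ℕ) :
    spreadBound k (d + 1) (2 * (d + 1) + 1) =
      (k * (d + 2) + 1) * spreadBound k d (2 * d + 1) * (k + 1) := by
  rw [spreadBound, show 2 * (d + 1) + 1 = 2 * d + 1 + 1 + 1 by ring, prod_range_succ',
    prod_range_succ, spreadBound]
  simp only [Nat.add_sub_add_right, Nat.sub_zero, show d - (2 * d + 1) = 0 by omega]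
  ring

theorem spreadBound_le_prod {k : ℕ} (hk : k ≠ 0) {d : ℕ} (hd : d ≠ 0) :
    spreadBound k d (2 * d + 1) ≤ k * ∏ i ∈ Icc 2 (2 * d + 1), (i * k + 1) := by
  induction d, Nat.one_le_iff_ne_zero.2 hd using Nat.le_induction with
  | base =>
    have h : (k + 1) * (k + 1) ≤ k * (3 * k + 1) := by
      nlinarith [Nat.one_le_iff_ne_zero.2 hk]
    calc spreadBound k 1 (2 * 1 + 1) = (2 * k + 1) * ((k + 1) * (k + 1)) := by
          norm_num [spreadBound, prod_range_succ]
          ring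
      _ ≤ (2 * k + 1) * (k * (3 * k + 1)) := Nat.mul_le_mul_left _ h
      _ = k * ∏ i ∈ Icc 2 (2 * 1 + 1), (i * k + 1) := by
          rw [prod_Icc_succ_top (by norm_num : 2 ≤ 2 + 1), Icc_self, prod_singleton]
          ring
  | succ d hd₁ ih =>
    rw [spreadBound_two_mul_add_one_succ, show 2 * (d + 1) + 1 = 2 * d + 1 + 1 + 1 by ring,
      prod_Icc_succ_top (by omega), prod_Icc_succ_top (by omega)]
    set P := ∏ i ∈ Icc 2 (2 * d + 1), (i * k + 1)
    calc (k * (d + 2) + 1) * spreadBound k d (2 * d + 1) * (k + 1)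
        ≤ (k * (d + 2) + 1) * (k * P) * (k + 1) := by gcongr; exact ih (by omega)
      _ = k * P * ((k * (d + 2) + 1) * (k + 1)) := by ring
      _ ≤ k * P * (((2 * d + 1 + 1) * k + 1) * ((2 * d + 2 + 1) * k + 1)) :=
          Nat.mul_le_mul_left _ (Nat.mul_le_mul (by nlinarith) (by nlinarith))
      _ = k * (P * ((2 * d + 1 + 1) * k + 1) * ((2 * d + 2 + 1) * k + 1)) := by ring

end SimpleGraph

open SimpleGraph

theorem close_count_bound_general {V : Type*} (X : SimpleGraph V) (m k : ℕ)
    (hk : 0 < k) (hX : IsKGeodetic X k)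
    {u₁ v₁ u₂ v₂ : V} (n : ℕ)
    (p₁ : X.Walk u₁ v₁) (p₂ : X.Walk u₂ v₂)
    (hn₁ : p₁.length = n) (hn₂ : p₂.length = n)
    (hgeo₂ : p₂.length = X.dist u₂ v₂)
    (hdisj : ∀ i j, i ≤ n → j ≤ n → i ≠ j → p₁.getVert i ≠ p₂.getVert j) :
    ((Finset.range (n + 1)).filter
        (fun i => 1 ≤ X.dist (p₁.getVert i) (p₂.getVert i) ∧
          X.dist (p₁.getVert i) (p₂.getVert i) ≤ m)).card
      ≤ m * (m * (k * ∏ i ∈ Finset.Icc 2 (2 * m + 1), (i * k + 1))) := by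
  subst hn₂
  have hγ : p₁.IsAsyncDisjoint p₂ := ⟨hn₁, hdisj⟩
  set A := k * ∏ i ∈ Icc 2 (2 * m + 1), (i * k + 1)
  have hA : ∀ d ∈ Icc 1 m, #(indicesAtDist p₁ p₂ d) ≤ A := fun d hd ↦ by
    obtain ⟨hd₁, hdm⟩ := mem_Icc.1 hd
    refine (card_indicesAtDist_le hX hgeo₂ hγ (by omega)).trans
      ((spreadBound_le_prod hk.ne' (by omega)).trans (Nat.mul_le_mul_left k ?_))
    exact prod_le_prod_of_subset_of_one_le' (Icc_subset_Icc le_rfl (by omega)) (by simp)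
  calc _ ≤ #((Icc 1 m).biUnion (indicesAtDist p₁ p₂)) := card_le_card fun i hi ↦ by
          obtain ⟨hi, hclose⟩ := mem_filter.1 hi
          exact mem_biUnion.2 ⟨_, mem_Icc.2 hclose,
            mem_indicesAtDist.2 ⟨Nat.lt_succ_iff.1 (mem_range.1 hi), rfl⟩⟩
    _ ≤ ∑ d ∈ Icc 1 m, #(indicesAtDist p₁ p₂ d) := card_biUnion_le
    _ ≤ ∑ _d ∈ Icc 1 m, A := sum_le_sum hA
    _ = m * A := by simp
    _ ≤ m * m * A := Nat.mul_le_mul_right A (Nat.le_mul_self m)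
    _ = m * (m * A) := mul_assoc m m A

/-- With `C(m,k) = m · A(m,k)` where
`A(m,k) = m · k · ∏_{i=2}^{2m+1} (i k + 1)`, in any `k`-geodetic graph, for any pair of
asynchronously disjoint geodesics `p₁, p₂` of the same length `n`, the number of indices
`i ∈ {0, …, n}` at which the two geodesics are `m`-close (i.e. `1 ≤ d(p₁(i), p₂(i)) ≤ m`)
is at most `C(m,k)`. -/
theorem close_count_bound {V : Type*} (X : SimpleGraph V) (m k : ℕ)
    (hm : 0 < m) (hk : 0 < k) (hX : IsKGeodetic X k)
    {u₁ v₁ u₂ v₂ : V} (n : ℕ)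
    (p₁ : X.Walk u₁ v₁) (p₂ : X.Walk u₂ v₂)
    (hn₁ : p₁.length = n) (hn₂ : p₂.length = n)
    (hgeo₁ : p₁.length = X.dist u₁ v₁) (hgeo₂ : p₂.length = X.dist u₂ v₂)
    (hdisj : ∀ i j, i ≤ n → j ≤ n → i ≠ j → p₁.getVert i ≠ p₂.getVert j) :
    ((Finset.range (n + 1)).filter
        (fun i => 1 ≤ X.dist (p₁.getVert i) (p₂.getVert i) ∧
          X.dist (p₁.getVert i) (p₂.getVert i) ≤ m)).card
      ≤ m * (m * (k * ∏ i ∈ Finset.Icc 2 (2 * m + 1), (i * k + 1))) :=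
  close_count_bound_general X m k hk hX n p₁ p₂ hn₁ hn₂ hgeo₂ hdisj
end

section
/- Let k be a positive integer and let G be a group with a finite inverse-closed generating set S such that Cay(G,S) is k-geodetic. If u is a nonempty primitive word over S such that u^r is a geodesic word for every r ≥ 1, and u evaluates to the element g ∈ G, then the centraliser of g in G equals the cyclic subgroup generated by g: C_G(g) = ⟨g⟩. -/
/-- The (undirected) Cayley graph of a group `G` with respect to a subset `S`. -/
def cayleyGraph (G : Type*) [Group G] (S : Set G) : SimpleGraph G :=
  SimpleGraph.fromRel (fun g h => g⁻¹ * h ∈ S)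

/-!
Write `|x|` for the distance from `1` to `x`, let `g = u.prod` and let `h` commute with `g`.
Since every `u ^ s` is geodesic, `|g ^ s| = s * |u|`, so by the triangle inequality the defect
`|g ^ s * h| - s * |u|` stays within `|h|` of `0`; hence it takes the same value at some `r` and
`r + M` with `M ≥ k`. If `w` is a geodesic word for `g ^ r * h`, the `M + 1` words
`u ^ a * w * u ^ (M - a)` all spell `g ^ (r + M) * h` and have length `|g ^ (r + M) * h|`,
so they are geodesic, and `k`-geodeticity makes two of them equal. Cancelling, `w` commutes with
a positive power of `u`; by the Lyndon–Schützenberger theorem and primitivity of `u`, `w` is a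
power of `u`, whence `h ∈ ⟨g⟩`.
-/

namespace List

variable {α : Type*}

theorem flatten_replicate_append_append (x y : List α) (t : ℕ) :
    (replicate t (x ++ y)).flatten ++ x = x ++ (replicate t (y ++ x)).flatten := by
  induction t with
  | zero => simp
  | succ t ih => simp [replicate_succ, ih]

theorem flatten_replicate_append_comm (y : List α) (t : ℕ) :
    (replicate t y).flatten ++ y = y ++ (replicate t y).flatten := by
  simpa using flatten_replicate_append_append y [] t

theorem exists_eq_flatten_replicate_of_append_comm {x y : List α} (h : x ++ y = y ++ x) :
    ∃ z a b, x = (replicate a z).flatten ∧ y = (replicate b z).flatten := by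
  induction hn : x.length + y.length using Nat.strong_induction_on generalizing x y with
  | _ n ih =>
  wlog hle : x.length ≤ y.length generalizing x y
  · obtain ⟨z, a, b, hy, hx⟩ := this h.symm (by omega) (by omega)
    exact ⟨z, b, a, hx, hy⟩
  rcases eq_or_ne x [] with rfl | hx
  · exact ⟨y, 0, 1, by simp, by simp⟩
  obtain ⟨y', rfl⟩ : x <+: y :=
    prefix_of_prefix_length_le (h ▸ prefix_append x y) (prefix_append y x) hle
  simp only [append_assoc, append_cancel_left_eq] at h
  obtain ⟨z, a, b, rfl, rfl⟩ :=
    ih _ (by simpa [← hn] using length_pos_iff.mpr hx) h rfl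
  exact ⟨z, a, a + b, rfl, by rw [replicate_add, flatten_append]⟩

theorem append_comm_of_append_comm_flatten_replicate {x y : List α} {t : ℕ} (ht : t ≠ 0)
    (h : x ++ (replicate t y).flatten = (replicate t y).flatten ++ x) : x ++ y = y ++ x := by
  obtain ⟨s, rfl⟩ := Nat.exists_eq_succ_of_ne_zero ht
  induction hn : x.length using Nat.strong_induction_on generalizing x with
  | _ n ih =>
  rcases le_or_gt y.length x.length with hle | hlt
  · obtain ⟨x', rfl⟩ : y <+: x := by
      refine prefix_of_prefix_length_le ?_ (h ▸ prefix_append x _) hle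
      simp [replicate_succ, append_assoc]
    rcases eq_or_ne y [] with rfl | hy
    · simp
    have h' : x' ++ (replicate (s + 1) y).flatten = (replicate (s + 1) y).flatten ++ x' := by
      rw [append_assoc, ← append_assoc _ y, flatten_replicate_append_comm, append_assoc,
        append_cancel_left_eq] at h
      exact h
    rw [append_assoc, ih _ (by simpa [← hn] using length_pos_iff.mpr hy) h' rfl]
  · obtain ⟨y', rfl⟩ : x <+: y := by
      refine prefix_of_prefix_length_le (h ▸ prefix_append x _) ?_ hlt.le
      simp [replicate_succ, append_assoc]
    rw [flatten_replicate_append_append, append_cancel_left_eq] at h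
    simp only [replicate_succ, flatten_cons] at h
    have hcomm := (append_inj h (by simp [add_comm])).1
    calc x ++ (x ++ y') = x ++ (y' ++ x) := by rw [hcomm]
      _ = x ++ y' ++ x := (append_assoc ..).symm

theorem eq_flatten_replicate_of_append_comm_flatten_replicate {u w : List α}
    (hprim : ∀ v m, 1 < m → u ≠ (replicate m v).flatten) {t : ℕ} (ht : t ≠ 0)
    (h : w ++ (replicate t u).flatten = (replicate t u).flatten ++ w) :
    ∃ q, w = (replicate q u).flatten := by
  obtain ⟨z, q, p, rfl, rfl⟩ :=
    exists_eq_flatten_replicate_of_append_comm (append_comm_of_append_comm_flatten_replicate ht h)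
  obtain rfl | rfl | hp : p = 0 ∨ p = 1 ∨ 1 < p := by omega
  · exact absurd (by simp) (hprim [] 2 one_lt_two)
  · exact ⟨q, by simp⟩
  · exact absurd rfl (hprim z p hp)

theorem eq_flatten_replicate_of_flatten_replicate_append_eq {u w : List α}
    (hprim : ∀ v m, 1 < m → u ≠ (replicate m v).flatten) {a b M : ℕ} (hab : a < b) (hbM : b ≤ M)
    (h : (replicate a u).flatten ++ w ++ (replicate (M - a) u).flatten =
      (replicate b u).flatten ++ w ++ (replicate (M - b) u).flatten) :
    ∃ q, w = (replicate q u).flatten := by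
  obtain ⟨d, rfl⟩ := Nat.exists_eq_add_of_le hab.le
  obtain ⟨c, rfl⟩ := Nat.exists_eq_add_of_le hbM
  rw [show a + d + c - a = d + c by omega, Nat.add_sub_cancel_left] at h
  simp only [replicate_add, flatten_append, append_assoc, append_cancel_left_eq] at h
  rw [← append_assoc, ← append_assoc] at h
  exact eq_flatten_replicate_of_append_comm_flatten_replicate hprim (by omega)
    (append_cancel_right h)

theorem prod_flatten_replicate_append_append {M : Type*} [Monoid M] {u w : List M}
    (hcomm : Commute u.prod w.prod) {a n : ℕ} (ha : a ≤ n) :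
    ((replicate a u).flatten ++ w ++ (replicate (n - a) u).flatten).prod = u.prod ^ n * w.prod := by
  simp only [prod_append, prod_flatten, map_replicate, prod_replicate, mul_assoc,
    (hcomm.pow_left (n - a)).symm.eq]
  rw [← mul_assoc, ← pow_add, Nat.add_sub_cancel' ha]

end List

def IsGeodesicWord {G : Type*} [Group G] (S : Set G) (w : List G) : Prop :=
  (∀ a ∈ w, a ∈ S) ∧ w.length = (cayleyGraph G S).dist 1 w.prod

namespace cayleyGraph

open SimpleGraph

variable {G : Type*} [Group G] {S : Set G}

theorem adj_mul (hone : (1 : G) ∉ S) (x : G) {a : G} (ha : a ∈ S) :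
    (cayleyGraph G S).Adj x (x * a) :=
  (fromRel_adj _ _ _).mpr ⟨fun hx => hone (mul_eq_left.mp hx.symm ▸ ha), Or.inl (by simpa)⟩

theorem inv_mul_mem_of_adj (hinv : ∀ s ∈ S, s⁻¹ ∈ S) {x y : G}
    (h : (cayleyGraph G S).Adj x y) : x⁻¹ * y ∈ S := by
  obtain ⟨-, h | h⟩ := (fromRel_adj _ _ _).mp h
  · exact h
  · simpa using hinv _ h

theorem dist_mul_left_le (hconn : (cayleyGraph G S).Connected) (a x y : G) :
    (cayleyGraph G S).dist (a * x) (a * y) ≤ (cayleyGraph G S).dist x y := by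
  let mulLeft : cayleyGraph G S →g cayleyGraph G S :=
    ⟨(a * ·), fun {x y} h => by simpa [cayleyGraph, mul_assoc] using h⟩
  obtain ⟨p, hp⟩ := hconn.exists_walk_length_eq_dist x y
  calc _ ≤ (p.map mulLeft).length := dist_le _
    _ = _ := by rw [Walk.length_map, hp]

theorem abs_dist_mul_sub_le (hconn : (cayleyGraph G S).Connected) (x y : G) :
    |((cayleyGraph G S).dist 1 (x * y) : ℤ) - (cayleyGraph G S).dist 1 x|
      ≤ (cayleyGraph G S).dist 1 y := by
  have hy : (cayleyGraph G S).dist x (x * y) ≤ (cayleyGraph G S).dist 1 y := by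
    simpa using dist_mul_left_le hconn x 1 y
  have h₁ := hconn.dist_triangle (u := 1) (v := x) (w := x * y)
  have h₂ := hconn.dist_triangle (u := 1) (v := x * y) (w := x)
  rw [dist_comm (u := x * y)] at h₂
  rw [abs_le]
  constructor <;> omega

def walkOfWord (hone : (1 : G) ∉ S) :
    (x : G) → (w : List G) → (∀ a ∈ w, a ∈ S) → (cayleyGraph G S).Walk x (x * w.prod)
  | x, [], _ => Walk.nil.copy rfl (by simp)
  | x, a :: w, hw =>
    Walk.cons (adj_mul hone x (hw a (by simp)))
      ((walkOfWord hone (x * a) w fun b hb => hw b (by simp [hb])).copy rfl (by simp [mul_assoc]))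

def wordOfWalk {x y : G} (p : (cayleyGraph G S).Walk x y) : List G :=
  p.darts.map fun d => d.fst⁻¹ * d.snd

@[simp]
theorem wordOfWalk_copy {x y x' y' : G} (p : (cayleyGraph G S).Walk x y) (hx : x = x')
    (hy : y = y') : wordOfWalk (p.copy hx hy) = wordOfWalk p := by
  simp [wordOfWalk]

@[simp]
theorem length_wordOfWalk {x y : G} (p : (cayleyGraph G S).Walk x y) :
    (wordOfWalk p).length = p.length := by
  simp [wordOfWalk]

theorem mul_prod_wordOfWalk {x y : G} (p : (cayleyGraph G S).Walk x y) :
    x * (wordOfWalk p).prod = y := by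
  induction p with
  | nil => simp [wordOfWalk]
  | cons _ p ih => simpa [wordOfWalk, mul_assoc] using ih

theorem mem_of_mem_wordOfWalk (hinv : ∀ s ∈ S, s⁻¹ ∈ S) {x y : G}
    (p : (cayleyGraph G S).Walk x y) : ∀ a ∈ wordOfWalk p, a ∈ S := by
  simpa [wordOfWalk] using fun d _ => inv_mul_mem_of_adj hinv d.adj

@[simp]
theorem wordOfWalk_walkOfWord (hone : (1 : G) ∉ S) (x : G) (w : List G)
    (hw : ∀ a ∈ w, a ∈ S) : wordOfWalk (walkOfWord hone x w hw) = w := by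
  induction w generalizing x with
  | nil => simp only [walkOfWord, wordOfWalk, Walk.darts_copy, Walk.darts_nil, List.map_nil]
  | cons a w ih => simpa [walkOfWord, wordOfWalk] using ih _ _

@[simp]
theorem length_walkOfWord (hone : (1 : G) ∉ S) (x : G) (w : List G) (hw : ∀ a ∈ w, a ∈ S) :
    (walkOfWord hone x w hw).length = w.length := by
  rw [← length_wordOfWalk, wordOfWalk_walkOfWord]

theorem exists_isGeodesicWord (hinv : ∀ s ∈ S, s⁻¹ ∈ S) (hconn : (cayleyGraph G S).Connected)
    (x : G) : ∃ w, IsGeodesicWord S w ∧ w.prod = x := by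
  obtain ⟨p, hp⟩ := hconn.exists_walk_length_eq_dist 1 x
  have hprod : (wordOfWalk p).prod = x := by simpa using mul_prod_wordOfWalk p
  exact ⟨wordOfWalk p, ⟨mem_of_mem_wordOfWalk hinv p, by simp [hprod, hp]⟩, hprod⟩

end cayleyGraph

theorem IsKGeodetic.card_le_of_isGeodesicWord {G : Type*} [Group G] {S : Set G} {k : ℕ}
    (hgeo : IsKGeodetic (cayleyGraph G S) k) (hone : (1 : G) ∉ S) {x : G} (s : Finset (List G))
    (hs : ∀ w ∈ s, IsGeodesicWord S w ∧ w.prod = x) : s.card ≤ k := by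
  classical
  let walk (w : s) : (cayleyGraph G S).Walk 1 x :=
    (cayleyGraph.walkOfWord hone 1 w (hs w w.2).1.1).copy rfl (by simp [(hs w w.2).2])
  have hwalk : walk.Injective := fun w w' h => by
    have := congrArg cayleyGraph.wordOfWalk h
    simp only [walk, cayleyGraph.wordOfWalk_copy, cayleyGraph.wordOfWalk_walkOfWord] at this
    exact Subtype.ext this
  calc s.card = (s.attach.image walk).card := by
        rw [Finset.card_image_of_injective _ hwalk, Finset.card_attach]
    _ ≤ k := hgeo.2 1 x _ (by
        simp only [Finset.mem_image, Finset.mem_attach, true_and, forall_exists_index]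
        rintro _ w rfl
        obtain ⟨⟨-, hlen⟩, hprod⟩ := hs w w.2
        simpa [walk, ← hprod] using hlen)

theorem Set.Finite.exists_le_and_map_add_eq {β : Type*} {t : Set β} (ht : t.Finite) {f : ℕ → β}
    (hf : ∀ n, f n ∈ t) (k : ℕ) : ∃ r M, k ≤ M ∧ f (r + M) = f r := by
  obtain ⟨a, b, hab, heq⟩ :=
    ht.exists_lt_map_eq_of_forall_mem (f := fun j => f (j * k)) fun j => hf _
  refine ⟨a * k, (b - a) * k, Nat.le_mul_of_pos_left k (by omega), ?_⟩
  rw [← Nat.add_mul, Nat.add_sub_cancel' hab.le]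
  exact heq.symm

theorem IsGeodesicWord.flatten_replicate_append_append {G : Type*} [Group G] {S : Set G}
    {u w : List G} (hu : ∀ a ∈ u, a ∈ S) (hw : IsGeodesicWord S w)
    (hcomm : Commute u.prod w.prod) {a n : ℕ} (ha : a ≤ n)
    (hdist : (cayleyGraph G S).dist 1 (u.prod ^ n * w.prod)
      = (cayleyGraph G S).dist 1 w.prod + n * u.length) :
    IsGeodesicWord S ((List.replicate a u).flatten ++ w ++ (List.replicate (n - a) u).flatten) := by
  refine ⟨?_, ?_⟩
  · simp only [List.mem_append, List.mem_flatten, List.mem_replicate]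
    rintro x ((⟨_, ⟨-, rfl⟩, hx⟩ | hx) | ⟨_, ⟨-, rfl⟩, hx⟩)
    exacts [hu x hx, hw.1 x hx, hu x hx]
  · rw [List.prod_flatten_replicate_append_append hcomm ha, hdist, ← hw.2]
    obtain ⟨c, rfl⟩ := Nat.exists_eq_add_of_le ha
    simp only [List.length_append, List.length_flatten, List.map_replicate, List.sum_replicate,
      smul_eq_mul, Nat.add_sub_cancel_left]
    ring

theorem IsKGeodetic.mem_zpowers_of_dist_pow_add_mul_eq {G : Type*} [Group G] {S : Set G} {k : ℕ}
    (hgeo : IsKGeodetic (cayleyGraph G S) k) (hinv : ∀ s ∈ S, s⁻¹ ∈ S) (hone : (1 : G) ∉ S)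
    {u : List G} (hmem : ∀ a ∈ u, a ∈ S)
    (hprim : ∀ (v : List G) (m : ℕ), 1 < m → u ≠ (List.replicate m v).flatten)
    {h : G} (hcomm : Commute u.prod h) {r M : ℕ} (hM : k ≤ M)
    (hdist : (cayleyGraph G S).dist 1 (u.prod ^ (r + M) * h)
      = (cayleyGraph G S).dist 1 (u.prod ^ r * h) + M * u.length) :
    h ∈ Subgroup.zpowers u.prod := by
  by_contra hh
  obtain ⟨w, hw, hwprod⟩ := cayleyGraph.exists_isGeodesicWord hinv hgeo.1 (u.prod ^ r * h)
  have hcommw : Commute u.prod w.prod := hwprod ▸ ((Commute.refl _).pow_right r).mul_right hcomm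
  have hdistw : (cayleyGraph G S).dist 1 (u.prod ^ M * w.prod)
      = (cayleyGraph G S).dist 1 w.prod + M * u.length := by
    rw [hwprod, ← mul_assoc, ← pow_add, add_comm M, hdist]
  let Q (a : ℕ) : List G :=
    (List.replicate a u).flatten ++ w ++ (List.replicate (M - a) u).flatten
  have hQne : ∀ a b, a < b → b ≤ M → Q a ≠ Q b := by
    intro a b hab hbM hQab
    obtain ⟨q, rfl⟩ := List.eq_flatten_replicate_of_flatten_replicate_append_eq hprim hab hbM hQab
    refine hh (Subgroup.mem_zpowers_iff.mpr ⟨-(r : ℤ) + q, ?_⟩)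
    simp only [List.prod_flatten, List.map_replicate, List.prod_replicate] at hwprod
    rw [zpow_add, zpow_neg, zpow_natCast, zpow_natCast, hwprod, inv_mul_cancel_left]
  have hQinj : Set.InjOn Q (Finset.range (M + 1)) := by
    intro a ha b hb hab
    simp only [Finset.coe_range, Set.mem_Iio] at ha hb
    by_contra hne
    rcases Nat.lt_or_gt_of_ne hne with hlt | hlt
    exacts [hQne a b hlt (by omega) hab, hQne b a hlt (by omega) hab.symm]
  classical
  have hcard := hgeo.card_le_of_isGeodesicWord hone ((Finset.range (M + 1)).image Q) (by
    simp only [Finset.mem_image, Finset.mem_range, forall_exists_index, and_imp]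
    rintro _ a ha rfl
    exact ⟨hw.flatten_replicate_append_append hmem hcommw (by omega) hdistw,
      List.prod_flatten_replicate_append_append hcommw (by omega)⟩)
  rw [Finset.card_image_of_injOn hQinj, Finset.card_range] at hcard
  omega

theorem centralizer_eq_zpowers_of_primitive_allPowersGeodesic_general {G : Type*} [Group G]
    (k : ℕ) (S : Set G) (hinv : ∀ s ∈ S, s⁻¹ ∈ S)
    (hone : (1 : G) ∉ S)
    (hgeo : IsKGeodetic (cayleyGraph G S) k)
    (u : List G) (hmem : ∀ x ∈ u, x ∈ S)
    (hprim : ∀ (v : List G) (m : ℕ), 1 < m → u ≠ (List.replicate m v).flatten)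
    (hpow : ∀ r : ℕ, 1 ≤ r →
      ((List.replicate r u).flatten).length
        = (cayleyGraph G S).dist 1 ((List.replicate r u).flatten).prod) :
    Subgroup.centralizer {u.prod} = Subgroup.zpowers u.prod := by
  refine le_antisymm (fun h hh => ?_)
    (Subgroup.zpowers_le.mpr (Subgroup.mem_centralizer_singleton_iff.mpr rfl))
  have hcomm : Commute u.prod h := (Subgroup.mem_centralizer_singleton_iff.mp hh).symm
  have hdist_pow : ∀ s, (cayleyGraph G S).dist 1 (u.prod ^ s) = s * u.length := by
    rintro (_ | s)
    · simp
    · simpa using (hpow (s + 1) s.succ_pos).symm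
  set m := (cayleyGraph G S).dist 1 h
  obtain ⟨r, M, hM, hrM⟩ := (Set.finite_Icc (-(m : ℤ)) m).exists_le_and_map_add_eq
    (f := fun s => ((cayleyGraph G S).dist 1 (u.prod ^ s * h) : ℤ) - (s * u.length : ℕ))
    (fun s => by
      rw [Set.mem_Icc, ← abs_le, ← hdist_pow]
      exact cayleyGraph.abs_dist_mul_sub_le hgeo.1 (u.prod ^ s) h) k
  refine hgeo.mem_zpowers_of_dist_pow_add_mul_eq hinv hone hmem hprim hcomm (r := r) hM ?_
  push_cast at hrM
  zify
  linear_combination hrM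

/-- Let `Cay(G, S)` be `k`-geodetic. If `u` is a nonempty primitive word
over `S` (no word `v` satisfies `u = v^m` with `m > 1`) such that every power `u^r`
(`r ≥ 1`) is a geodesic word, then the centraliser of the element `g` represented by `u`
is exactly the cyclic subgroup generated by `g`. Here a word is modelled as a list of
elements of `S`, its evaluation is the product of the list, and being a geodesic word
means its length equals the graph distance from `1` to its evaluation. -/
theorem centralizer_eq_zpowers_of_primitive_allPowersGeodesic {G : Type*} [Group G]
    (k : ℕ) (hk : 0 < k) (S : Set G) (hfin : S.Finite) (hinv : ∀ s ∈ S, s⁻¹ ∈ S)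
    (hone : (1 : G) ∉ S) (hgen : Subgroup.closure S = ⊤)
    (hgeo : IsKGeodetic (cayleyGraph G S) k)
    (u : List G) (hmem : ∀ x ∈ u, x ∈ S) (hne : u ≠ [])
    (hprim : ∀ (v : List G) (m : ℕ), 1 < m → u ≠ (List.replicate m v).flatten)
    (hpow : ∀ r : ℕ, 1 ≤ r →
      ((List.replicate r u).flatten).length
        = (cayleyGraph G S).dist 1 ((List.replicate r u).flatten).prod) :
    Subgroup.centralizer {u.prod} = Subgroup.zpowers u.prod :=
  centralizer_eq_zpowers_of_primitive_allPowersGeodesic_general k S hinv hone hgeo u hmem hprim hpow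
end

section
/- The group ℤ × ℤ/2ℤ is virtually free, but for every positive integer k and every finite inverse-closed generating set S of ℤ × ℤ/2ℤ, the Cayley graph Cay(ℤ × ℤ/2ℤ, S) is not k-geodetic. -/
/-!
The kernel of the projection onto `ZMod 2` is infinite cyclic, hence free, of index two.

For the Cayley graph, let `x ∈ S` maximise the `ℤ`-coordinate, with maximum `a > 0`. Along a walk
the `ℤ`-coordinate grows by at most `a` per edge, so every walk from `1` to `x ^ n * y` has length
at least `n + 1` in two situations: `y ≠ x` is another generator of height `a`; or `x` is the only
generator of height `a` and `y ≠ 1` has height `≥ 0` (a walk of length `n` gaining `n * a` must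
step by `x` every time). Since the group is not cyclic, one of the two occurs. As the group is
abelian, the words `x ^ i * y * x ^ (n - i)`, `i ≤ n`, then spell `n + 1` distinct geodesics.
-/

open SimpleGraph

def IsVirtuallyFree (G : Type*) [Group G] : Prop :=
  ∃ H : Subgroup G, H.FiniteIndex ∧ IsFreeGroup H

theorem IsVirtuallyFree.of_mulEquiv {G G' : Type*} [Group G] [Group G'] (hG : IsVirtuallyFree G)
    (e : G ≃* G') : IsVirtuallyFree G' := by
  obtain ⟨H, hH, hfree⟩ := hG
  exact ⟨H.map (e : G →* G'), ⟨by rw [Subgroup.index_map_equiv]; exact hH.index_ne_zero⟩,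
    IsFreeGroup.ofMulEquiv (e.subgroupMap H)⟩

instance : IsFreeGroup (Multiplicative ℤ) :=
  IsFreeGroup.ofMulEquiv (FreeGroup.mulEquivIntOfUnique (α := Unit))

theorem isVirtuallyFree_prod {G F : Type*} [Group G] [IsFreeGroup G] [Group F] [Finite F] :
    IsVirtuallyFree (G × F) :=
  ⟨(MonoidHom.snd G F).ker, inferInstance, IsFreeGroup.ofMulEquiv
    ((MulEquiv.prodUnique.symm.trans (Subgroup.topEquiv.symm.prodCongr (MulEquiv.refl _))).trans
      ((Subgroup.prodEquiv ⊤ ⊥).symm.trans (MulEquiv.subgroupCongr MonoidHom.ker_snd.symm)))⟩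

theorem IsKGeodetic.card_le {V : Type*} {X : SimpleGraph V} {k : ℕ} (hX : IsKGeodetic X k)
    {u v : V} {m : ℕ} (s : Finset (X.Walk u v)) (hs : ∀ p ∈ s, p.length = m)
    (hmin : ∀ q : X.Walk u v, m ≤ q.length) : s.card ≤ k := by
  rcases s.eq_empty_or_nonempty with rfl | ⟨p, hp⟩
  · exact Nat.zero_le k
  have hdist : X.dist u v = m := by
    obtain ⟨q, hq⟩ := p.reachable.exists_walk_length_eq_dist
    exact le_antisymm (hs p hp ▸ dist_le p) (hq ▸ hmin q)
  exact hX.2 u v s (hdist ▸ hs)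

section Group

variable {G : Type*} [Group G] {S : Set G}

theorem cayleyGraph_adj_mul (h1 : (1 : G) ∉ S) {s : G} (hs : s ∈ S) (u : G) :
    (cayleyGraph G S).Adj u (u * s) :=
  ⟨fun h => h1 (left_eq_mul.mp h ▸ hs), .inl (by simpa using hs)⟩

theorem inv_mul_mem_of_cayleyGraph_adj (hS : ∀ s ∈ S, s⁻¹ ∈ S) {u v : G}
    (h : (cayleyGraph G S).Adj u v) : u⁻¹ * v ∈ S :=
  h.2.elim id fun h => by simpa using hS _ h

def cayleyWalk (h1 : (1 : G) ∉ S) (u : G) :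
    (l : List G) → (∀ s ∈ l, s ∈ S) → (cayleyGraph G S).Walk u (u * l.prod)
  | [], _ => Walk.nil.copy rfl (by simp)
  | s :: l, hl => (Walk.cons (cayleyGraph_adj_mul h1 (hl s (by simp)) u)
      (cayleyWalk h1 (u * s) l fun t ht => hl t (by simp [ht]))).copy rfl (by simp [mul_assoc])

@[simp]
theorem length_cayleyWalk (h1 : (1 : G) ∉ S) (u : G) (l : List G) (hl : ∀ s ∈ l, s ∈ S) :
    (cayleyWalk h1 u l hl).length = l.length := by
  induction l generalizing u with
  | nil => simp only [cayleyWalk, Walk.length_copy, Walk.length_nil, List.length_nil]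
  | cons s l ih => simp [cayleyWalk, ih]

@[simp]
theorem map_darts_cayleyWalk (h1 : (1 : G) ∉ S) (u : G) (l : List G) (hl : ∀ s ∈ l, s ∈ S) :
    (cayleyWalk h1 u l hl).darts.map (fun d => d.fst⁻¹ * d.snd) = l := by
  induction l generalizing u with
  | nil => simp only [cayleyWalk, Walk.darts_copy, Walk.darts_nil, List.map_nil]
  | cons s l ih => simp [cayleyWalk, ih]

variable (f : G →* Multiplicative ℤ) {a : ℤ}

theorem toAdd_le_mul_length (hS : ∀ s ∈ S, s⁻¹ ∈ S) (hf : ∀ s ∈ S, (f s).toAdd ≤ a) {u v : G}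
    (p : (cayleyGraph G S).Walk u v) : (f (u⁻¹ * v)).toAdd ≤ a * p.length := by
  induction p with
  | nil => simp
  | @cons u w v h q ih =>
    have hstep := hf _ (inv_mul_mem_of_cayleyGraph_adj hS h)
    have hsplit : u⁻¹ * v = u⁻¹ * w * (w⁻¹ * v) := by group
    rw [hsplit, map_mul, toAdd_mul, Walk.length_cons]
    push_cast
    linarith

theorem eq_mul_pow_length_of_toAdd_eq (hS : ∀ s ∈ S, s⁻¹ ∈ S) (hf : ∀ s ∈ S, (f s).toAdd ≤ a)
    {x : G} (hx : ∀ s ∈ S, (f s).toAdd = a → s = x) {u v : G} (p : (cayleyGraph G S).Walk u v)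
    (hp : (f (u⁻¹ * v)).toAdd = a * p.length) : v = u * x ^ p.length := by
  induction p with
  | nil => simp
  | @cons u w v h q ih =>
    have hstep := hf _ (inv_mul_mem_of_cayleyGraph_adj hS h)
    have hrest := toAdd_le_mul_length f hS hf q
    have hsplit : u⁻¹ * v = u⁻¹ * w * (w⁻¹ * v) := by group
    rw [hsplit, map_mul, toAdd_mul, Walk.length_cons] at hp
    push_cast at hp
    have hw : w = u * x := by
      rw [← hx _ (inv_mul_mem_of_cayleyGraph_adj hS h) (by linarith), mul_inv_cancel_left]
    rw [Walk.length_cons, pow_succ', ← mul_assoc, ← hw]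
    exact ih (by linarith)

theorem add_one_le_length_of_toAdd_eq (hS : ∀ s ∈ S, s⁻¹ ∈ S) (hf : ∀ s ∈ S, (f s).toAdd ≤ a)
    (ha : 0 < a) {x y : G} (hx : (f x).toAdd = a) (hy : (f y).toAdd = a) {n : ℕ}
    (p : (cayleyGraph G S).Walk 1 (x ^ n * y)) : n + 1 ≤ p.length := by
  have hp := toAdd_le_mul_length f hS hf p
  simp only [inv_one, one_mul, map_mul, map_pow, toAdd_mul, toAdd_pow, hx, hy, nsmul_eq_mul] at hp
  exact_mod_cast le_of_mul_le_mul_left (by linarith : a * (n + 1) ≤ a * p.length) ha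

theorem add_one_le_length_of_unique_toAdd_eq (hS : ∀ s ∈ S, s⁻¹ ∈ S)
    (hf : ∀ s ∈ S, (f s).toAdd ≤ a) (ha : 0 < a) {x y : G} (hx : (f x).toAdd = a)
    (hxu : ∀ s ∈ S, (f s).toAdd = a → s = x) (hy : 0 ≤ (f y).toAdd) (hy1 : y ≠ 1) {n : ℕ}
    (p : (cayleyGraph G S).Walk 1 (x ^ n * y)) : n + 1 ≤ p.length := by
  by_contra! hlen
  have hp := toAdd_le_mul_length f hS hf p
  simp only [inv_one, one_mul, map_mul, map_pow, toAdd_mul, toAdd_pow, hx, nsmul_eq_mul] at hp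
  have hlen' : (p.length : ℤ) ≤ n := by exact_mod_cast Nat.lt_succ_iff.mp hlen
  have hn : p.length = n := by
    have : (n : ℤ) ≤ p.length := le_of_mul_le_mul_left (by nlinarith) ha
    omega
  have hy0 : (f y).toAdd = 0 := by rw [hn] at hp; linarith
  have hrigid := eq_mul_pow_length_of_toAdd_eq f hS hf hxu p (by
    simp only [inv_one, one_mul, map_mul, map_pow, toAdd_mul, toAdd_pow, hx, hy0, nsmul_eq_mul, hn]
    ring)
  exact hy1 (by simpa [hn] using hrigid)

theorem exists_mem_ne_ne_inv_of_not_isCyclic (hG : ¬ IsCyclic G) (hgen : Subgroup.closure S = ⊤)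
    (x : G) : ∃ y ∈ S, y ≠ x ∧ y ≠ x⁻¹ := by
  by_contra! h
  refine hG (isCyclic_iff_exists_zpowers_eq_top.2 ⟨x, top_le_iff.1 ?_⟩)
  refine hgen ▸ (Subgroup.closure_le _).2 fun y hy => ?_
  by_cases hyx : y = x
  · exact hyx ▸ Subgroup.mem_zpowers x
  · exact h y hy hyx ▸ Subgroup.inv_mem _ (Subgroup.mem_zpowers x)

theorem exists_mem_toAdd_pos (hS : ∀ s ∈ S, s⁻¹ ∈ S) (hgen : Subgroup.closure S = ⊤)
    {f : G →* Multiplicative ℤ} (hf : f ≠ 1) : ∃ s ∈ S, 0 < (f s).toAdd := by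
  by_contra! h
  have hker : Subgroup.closure S ≤ f.ker := (Subgroup.closure_le _).2 fun s hs => by
    have hinv := h _ (hS s hs)
    rw [map_inv, toAdd_inv] at hinv
    exact toAdd_eq_zero.1 (le_antisymm (h s hs) (by linarith))
  exact hf (MonoidHom.ext fun g => hker (hgen ▸ Subgroup.mem_top g))

end Group

theorem not_isKGeodetic_cayleyGraph_of_length_ge {G : Type*} [CommGroup G] {S : Set G}
    (h1 : (1 : G) ∉ S) {x y : G} (hx : x ∈ S) (hy : y ∈ S) (hxy : x ≠ y) {n : ℕ}
    (hlong : ∀ p : (cayleyGraph G S).Walk 1 (x ^ n * y), n + 1 ≤ p.length) :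
    ¬ IsKGeodetic (cayleyGraph G S) n := by
  classical
  intro hX
  let l (i : Fin (n + 1)) : List G := List.replicate i x ++ y :: List.replicate (n - i) x
  have hlS (i) : ∀ s ∈ l i, s ∈ S := by
    simp only [l, List.mem_append, List.mem_cons, List.mem_replicate]
    rintro s (⟨-, rfl⟩ | rfl | ⟨-, rfl⟩) <;> assumption
  have hprod (i : Fin (n + 1)) : 1 * (l i).prod = x ^ n * y := by
    simp only [l, one_mul, List.prod_append, List.prod_cons, List.prod_replicate]
    rw [mul_comm y, ← mul_assoc, ← pow_add, Nat.add_sub_cancel' (Nat.lt_succ_iff.mp i.isLt)]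
  let w (i : Fin (n + 1)) : (cayleyGraph G S).Walk 1 (x ^ n * y) :=
    (cayleyWalk h1 1 (l i) (hlS i)).copy rfl (hprod i)
  have hw : Function.Injective w := by
    have hidx (i : Fin (n + 1)) : (l i).idxOf y = i := by
      rw [List.idxOf_append_of_notMem (by simp [hxy.symm]), List.idxOf_cons_self]
      simp
    intro i j hij
    have hl : l i = l j := by
      simpa [w] using congrArg (fun p => p.darts.map fun d => d.fst⁻¹ * d.snd) hij
    exact Fin.ext (by rw [← hidx i, ← hidx j, hl])
  have hlen (i) : (w i).length = n + 1 := by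
    simp only [w, l, Walk.length_copy, length_cayleyWalk, List.length_append, List.length_cons,
      List.length_replicate]
    omega
  have := hX.card_le (Finset.univ.map ⟨w, hw⟩) (by simpa using hlen) hlong
  simp at this

theorem not_isKGeodetic_cayleyGraph {G : Type*} [CommGroup G] (hG : ¬ IsCyclic G)
    {f : G →* Multiplicative ℤ} (hf : f ≠ 1) {S : Set G} (hfin : S.Finite)
    (hS : ∀ s ∈ S, s⁻¹ ∈ S) (h1 : (1 : G) ∉ S) (hgen : Subgroup.closure S = ⊤) (k : ℕ) :
    ¬ IsKGeodetic (cayleyGraph G S) k := by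
  obtain ⟨s₀, hs₀, hpos⟩ := exists_mem_toAdd_pos hS hgen hf
  obtain ⟨x, hx, hmax⟩ := S.exists_max_image (fun g => (f g).toAdd) hfin ⟨s₀, hs₀⟩
  have ha : 0 < (f x).toAdd := hpos.trans_le (hmax s₀ hs₀)
  by_cases hxu : ∀ s ∈ S, (f s).toAdd = (f x).toAdd → s = x
  · obtain ⟨z, hz, hzx, hzx'⟩ := exists_mem_ne_ne_inv_of_not_isCyclic hG hgen x
    obtain ⟨y, hy, hyx, hy0⟩ : ∃ y ∈ S, y ≠ x ∧ 0 ≤ (f y).toAdd := by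
      rcases le_total 0 (f z).toAdd with hz0 | hz0
      · exact ⟨z, hz, hzx, hz0⟩
      · exact ⟨z⁻¹, hS z hz, fun h => hzx' (by rw [← h, inv_inv]), by simpa using hz0⟩
    exact not_isKGeodetic_cayleyGraph_of_length_ge h1 hx hy (Ne.symm hyx)
      (add_one_le_length_of_unique_toAdd_eq f hS hmax ha rfl hxu hy0 fun h => h1 (h ▸ hy))
  · obtain ⟨y, hy, hfy, hyx⟩ : ∃ y ∈ S, (f y).toAdd = (f x).toAdd ∧ y ≠ x := by
      simpa using hxu
    exact not_isKGeodetic_cayleyGraph_of_length_ge h1 hx hy (Ne.symm hyx)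
      (add_one_le_length_of_toAdd_eq f hS hmax ha rfl hfy)

/-- The group `ℤ × ℤ/2ℤ` (written multiplicatively) is virtually free,
but for every positive integer `k` and every finite inverse-closed generating set `S`,
its Cayley graph is not `k`-geodetic. -/
theorem zmod2_prod_int_virtually_free_not_kgeodetic :
    (∃ H : Subgroup (Multiplicative (ℤ × ZMod 2)), H.FiniteIndex ∧ IsFreeGroup H) ∧
    ∀ (k : ℕ), 0 < k → ∀ S : Set (Multiplicative (ℤ × ZMod 2)),
      S.Finite → (∀ s ∈ S, s⁻¹ ∈ S) → (1 : Multiplicative (ℤ × ZMod 2)) ∉ S →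
      Subgroup.closure S = ⊤ →
      ¬ IsKGeodetic (cayleyGraph (Multiplicative (ℤ × ZMod 2)) S) k := by
  have hG : ¬ IsCyclic (Multiplicative (ℤ × ZMod 2)) := by
    rw [isCyclic_multiplicative_iff]
    exact not_isAddCyclic_prod_of_infinite_nontrivial ℤ (ZMod 2)
  have hf : AddMonoidHom.toMultiplicative (AddMonoidHom.fst ℤ (ZMod 2)) ≠ 1 := fun h => by
    simpa using DFunLike.congr_fun h (Multiplicative.ofAdd (1, 0))
  exact ⟨isVirtuallyFree_prod.of_mulEquiv (MulEquiv.prodMultiplicative ℤ (ZMod 2)).symm,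
    fun k _ S hfin hS h1 hgen => not_isKGeodetic_cayleyGraph hG hf hfin hS h1 hgen k⟩
end
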